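/- arXiv:2111.12367 — 12 statements merged into one kernel-verified Lean document; each statement's English description precedes it below -/
import Mathlib

section
/- For all real x with 0 ≤ x ≤ 1 and all real μ ≥ 1, (1+x)^μ ≥ 1 + (μ²/(μ+1))·x + (2^μ − μ²/(μ+1) − 1)·x^μ. -/
/-!
Put `a = μ² / (μ + 1)`. The quotient `g t = ((1 + t) ^ μ - 1 - a t) / t ^ μ` is antitone on
`(0, 1]`, so `g x ≥ g 1 = 2 ^ μ - a - 1`, which is the claim for `x > 0`. The numerator of
`g'` is `μ t ^ (μ - 1) (1 + c t - (1 + t) ^ (μ - 1))` with `c = μ (μ - 1) / (μ + 1)`, and the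
bound `1 + c t ≤ (1 + t) ^ (μ - 1)` on `[0, 1]` comes from Bernoulli's inequality when `μ ≥ 2`
and from the chord of the concave map `s ↦ s ^ (μ - 1)` on `[1, 2]` when `μ < 2`.
-/

open Real Set

lemma one_add_two_rpow_sub_one_mul_le_rpow_one_add {p t : ℝ} (hp0 : 0 ≤ p) (hp1 : p ≤ 1)
    (ht0 : 0 ≤ t) (ht1 : t ≤ 1) :
    1 + (2 ^ p - 1) * t ≤ (1 + t) ^ p := by
  have hchord := (concaveOn_rpow hp0 hp1).2 (x := 1) (y := 2) (by norm_num) (by norm_num)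
    (sub_nonneg.2 ht1) ht0 (by ring)
  simp only [smul_eq_mul, one_rpow, show (1 - t) * 1 + t * 2 = 1 + t by ring] at hchord
  linarith

lemma one_add_mul_log_le_rpow {b : ℝ} (hb : 0 < b) (p : ℝ) : 1 + p * log b ≤ b ^ p := by
  rw [rpow_def_of_pos hb]
  linarith [add_one_le_exp (log b * p)]

lemma one_add_mul_le_rpow_one_add_of_le_one {p t : ℝ} (hp : 0 ≤ p) (ht0 : 0 ≤ t)
    (ht1 : t ≤ 1) :
    1 + p * (p + 1) / (p + 2) * t ≤ (1 + t) ^ p := by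
  have hp2 : 0 < p + 2 := by linarith
  rcases le_or_gt 1 p with hp1 | hp1
  · have hcoef : p * (p + 1) / (p + 2) ≤ p := by
      rw [div_le_iff₀ hp2]; nlinarith
    calc 1 + p * (p + 1) / (p + 2) * t ≤ 1 + p * t := by gcongr
      _ ≤ (1 + t) ^ p := one_add_mul_self_le_rpow_one_add (by linarith) hp1
  · -- `(p + 1) / (p + 2) < 2 / 3 < log 2`
    have hcoef : p * (p + 1) / (p + 2) ≤ 2 ^ p - 1 := by
      have hlog : (0.6931471803 : ℝ) < log 2 := log_two_gt_d9
      have hp : p * (p + 1) / (p + 2) ≤ p * log 2 := by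
        rw [div_le_iff₀ hp2]
        nlinarith [mul_nonneg hp (by nlinarith : 0 ≤ log 2 * (p + 2) - (p + 1))]
      linarith [one_add_mul_log_le_rpow two_pos p]
    calc 1 + p * (p + 1) / (p + 2) * t ≤ 1 + (2 ^ p - 1) * t := by gcongr
      _ ≤ (1 + t) ^ p := one_add_two_rpow_sub_one_mul_le_rpow_one_add hp hp1.le ht0 ht1

noncomputable def remainderQuotient (μ a t : ℝ) : ℝ := ((1 + t) ^ μ - 1 - a * t) / t ^ μ

lemma hasDerivAt_remainderQuotient (μ a : ℝ) {t : ℝ} (ht : 0 < t) :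
    HasDerivAt (remainderQuotient μ a)
      (((μ * (1 + t) ^ (μ - 1) - a) * t ^ μ - ((1 + t) ^ μ - 1 - a * t) * (μ * t ^ (μ - 1)))
        / (t ^ μ) ^ 2) t := by
  have hpow := ((hasDerivAt_id t).const_add 1).rpow_const (p := μ) (Or.inl (by positivity))
  exact (((hpow.sub_const 1).sub ((hasDerivAt_id t).const_mul a)).div
    (hasDerivAt_rpow_const (Or.inl ht.ne')) (rpow_pos_of_pos ht μ).ne').congr_deriv (by simp)

lemma antitoneOn_remainderQuotient {μ : ℝ} (hμ : 1 ≤ μ) :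
    AntitoneOn (remainderQuotient μ (μ ^ 2 / (μ + 1))) (Ioc 0 1) := by
  set a := μ ^ 2 / (μ + 1)
  have hμ0 : 0 < μ := by linarith
  have hcont : ContinuousOn (remainderQuotient μ a) (Ioc 0 1) := fun t ht =>
    (hasDerivAt_remainderQuotient μ a ht.1).continuousAt.continuousWithinAt
  refine antitoneOn_of_deriv_nonpos (convex_Ioc 0 1) hcont ?_ ?_
  · intro t ht
    rw [interior_Ioc] at ht
    exact (hasDerivAt_remainderQuotient μ a ht.1).differentiableAt.differentiableWithinAt
  · intro t ht
    rw [interior_Ioc] at ht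
    obtain ⟨ht0, ht1⟩ := ht
    rw [(hasDerivAt_remainderQuotient μ a ht0).deriv]
    refine div_nonpos_of_nonpos_of_nonneg ?_ (sq_nonneg _)
    have hbern := one_add_mul_le_rpow_one_add_of_le_one (sub_nonneg.2 hμ) ht0.le ht1.le
    rw [sub_add_cancel, show μ - 1 + 2 = μ + 1 by ring] at hbern
    have ha : a * (μ - 1) = μ * ((μ - 1) * μ / (μ + 1)) := by
      simp only [a]; ring
    have ht_pow : t ^ μ = t ^ (μ - 1) * t := by rw [← rpow_add_one ht0.ne', sub_add_cancel]
    have hone_add_pow : (1 + t) ^ μ = (1 + t) ^ (μ - 1) * (1 + t) := by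
      rw [← rpow_add_one (by positivity), sub_add_cancel]
    have hnum :
        (μ * (1 + t) ^ (μ - 1) - a) * t ^ μ - ((1 + t) ^ μ - 1 - a * t) * (μ * t ^ (μ - 1)) =
          μ * t ^ (μ - 1) * (1 + (μ - 1) * μ / (μ + 1) * t - (1 + t) ^ (μ - 1)) := by
      rw [ht_pow, hone_add_pow]
      linear_combination t * t ^ (μ - 1) * ha
    rw [hnum]
    exact mul_nonpos_of_nonneg_of_nonpos (by positivity) (sub_nonpos.2 hbern)

theorem stmt_0 (x μ : ℝ) (hx0 : 0 ≤ x) (hx1 : x ≤ 1) (hμ : 1 ≤ μ) :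
    (1 + x) ^ μ ≥ 1 + (μ ^ 2 / (μ + 1)) * x + (2 ^ μ - μ ^ 2 / (μ + 1) - 1) * x ^ μ := by
  rcases hx0.eq_or_lt with rfl | hx0
  · simp [zero_rpow (by linarith : μ ≠ 0)]
  have hmono := antitoneOn_remainderQuotient hμ ⟨hx0, hx1⟩ ⟨one_pos, le_rfl⟩ hx1
  have hq1 : remainderQuotient μ (μ ^ 2 / (μ + 1)) 1 = 2 ^ μ - μ ^ 2 / (μ + 1) - 1 := by
    norm_num [remainderQuotient]; ring
  rw [hq1, remainderQuotient, le_div_iff₀ (rpow_pos_of_pos hx0 μ)] at hmono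
  linarith
end

section
/- For all real x with 0 < x ≤ 1 and real μ ≥ 1, the function f(x) = ((1+x)^μ − (μ²/(μ+1))·x − 1)/x^μ is monotonically decreasing in x on (0,1]. -/
/-!
Differentiating, `f'(x) = (μ + c (μ - 1) x - μ (1 + x) ^ (μ - 1)) / x ^ (μ + 1)` with
`c = μ² / (μ + 1)`, so the claim is the lower bound `1 + μ (μ - 1) / (μ + 1) · x ≤ (1 + x) ^ (μ - 1)`
on `[0, 1]`. For `μ ≥ 2` this is Bernoulli's inequality, since `μ / (μ + 1) ≤ 1`. For `μ < 2` the
exponent `p = μ - 1` lies in `[0, 1)`, so `(1 + x) ^ p` is concave and lies above its chord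
`1 + (2 ^ p - 1) x`; and `2 ^ p - 1 ≥ p log 2 ≥ p μ / (μ + 1)` because `μ / (μ + 1) < 2 / 3 < log 2`.
-/

open Set

namespace Real

lemma one_add_mul_log_le_rpow {a : ℝ} (ha : 0 < a) (p : ℝ) : 1 + p * log a ≤ a ^ p := by
  rw [rpow_def_of_pos ha, mul_comm p]
  linarith [add_one_le_exp (log a * p)]

lemma one_add_two_rpow_sub_one_mul_le_rpow_one_add {p x : ℝ} (hp₀ : 0 ≤ p) (hp₁ : p ≤ 1)
    (hx₀ : 0 ≤ x) (hx₁ : x ≤ 1) : 1 + (2 ^ p - 1) * x ≤ (1 + x) ^ p := by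
  have chord := (concaveOn_rpow hp₀ hp₁).2 (mem_Ici.2 zero_le_one) (mem_Ici.2 zero_le_two)
    (sub_nonneg.2 hx₁) hx₀ (sub_add_cancel 1 x)
  simp only [smul_eq_mul, one_rpow] at chord
  rw [show (1 - x) * 1 + x * 2 = 1 + x by ring] at chord
  linarith

lemma one_add_mul_le_rpow_sub_one {μ x : ℝ} (hμ : 1 ≤ μ) (hx₀ : 0 ≤ x) (hx₁ : x ≤ 1) :
    1 + μ * (μ - 1) / (μ + 1) * x ≤ (1 + x) ^ (μ - 1) := by
  have hμ₀ : 0 < μ + 1 := by linarith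
  rw [mul_comm μ, mul_div_assoc]
  rcases le_or_gt 2 μ with hμ₂ | hμ₂
  · calc 1 + (μ - 1) * (μ / (μ + 1)) * x ≤ 1 + (μ - 1) * x := by
          have : μ / (μ + 1) ≤ 1 := (div_le_one hμ₀).2 (by linarith)
          gcongr
          exact mul_le_of_le_one_right (by linarith) this
      _ ≤ (1 + x) ^ (μ - 1) := one_add_mul_self_le_rpow_one_add (by linarith) (by linarith)
  · calc 1 + (μ - 1) * (μ / (μ + 1)) * x ≤ 1 + (μ - 1) * log 2 * x := by
          have : μ / (μ + 1) ≤ log 2 := by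
            rw [div_le_iff₀ hμ₀]
            nlinarith [log_two_gt_d9]
          gcongr
      _ ≤ 1 + (2 ^ (μ - 1) - 1) * x := by
          gcongr
          linarith [one_add_mul_log_le_rpow two_pos (μ - 1)]
      _ ≤ (1 + x) ^ (μ - 1) :=
          one_add_two_rpow_sub_one_mul_le_rpow_one_add (by linarith) (by linarith) hx₀ hx₁

end Real

open Real

lemma hasDerivAt_one_add_rpow_sub_mul_sub_one_div_rpow (μ c : ℝ) {x : ℝ} (hx : 0 < x) :
    HasDerivAt (fun x : ℝ => ((1 + x) ^ μ - c * x - 1) / x ^ μ)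
      ((μ + c * (μ - 1) * x - μ * (1 + x) ^ (μ - 1)) / x ^ (μ + 1)) x := by
  have h1x : 0 < 1 + x := by linarith
  have hnum : HasDerivAt (fun x : ℝ => (1 + x) ^ μ - c * x - 1)
      (μ * (1 + x) ^ (μ - 1) - c) x := by
    have hpow := (hasDerivAt_rpow_const (p := μ) (Or.inl h1x.ne')).comp x
      ((hasDerivAt_id x).const_add 1)
    simpa using (hpow.sub ((hasDerivAt_id x).const_mul c)).sub_const 1
  refine (hnum.div (hasDerivAt_rpow_const (p := μ) (Or.inl hx.ne')) (by positivity)).congr_deriv ?_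
  rw [rpow_add hx, rpow_one, rpow_sub_one h1x.ne', rpow_sub_one hx.ne']
  have : 0 < x ^ μ := by positivity
  field_simp
  ring

theorem stmt_3 (μ : ℝ) (hμ : 1 ≤ μ) :
    AntitoneOn (fun x : ℝ => ((1 + x) ^ μ - (μ ^ 2 / (μ + 1)) * x - 1) / x ^ μ)
      (Set.Ioc (0 : ℝ) 1) := by
  have hderiv := fun {x : ℝ} (hx : 0 < x) =>
    hasDerivAt_one_add_rpow_sub_mul_sub_one_div_rpow μ (μ ^ 2 / (μ + 1)) hx
  refine antitoneOn_of_hasDerivWithinAt_nonpos (convex_Ioc 0 1)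
    (fun x hx => (hderiv hx.1).continuousAt.continuousWithinAt)
    (fun x hx => (hderiv (interior_subset hx).1).hasDerivWithinAt) ?_
  rw [interior_Ioc]
  rintro x ⟨hx₀, hx₁⟩
  have hbound := one_add_mul_le_rpow_sub_one hμ hx₀.le hx₁.le
  have hnum : μ + μ ^ 2 / (μ + 1) * (μ - 1) * x - μ * (1 + x) ^ (μ - 1) =
      μ * (1 + μ * (μ - 1) / (μ + 1) * x - (1 + x) ^ (μ - 1)) := by ring
  rw [hnum]
  exact div_nonpos_of_nonpos_of_nonneg
    (mul_nonpos_of_nonneg_of_nonpos (by linarith) (by linarith)) (by positivity)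
end

section
/- For all real x with 0 ≤ x ≤ 1 and real μ ≥ 1, 1 + (μ(μ−1)/(μ+1))·x ≤ (1+x)^(μ−1). -/
open Real

lemma exp_chord (t : ℝ) (ht0 : 0 ≤ t) (ht1 : t ≤ 1) : Real.exp (t * Real.log 2) ≤ 1 + t := by
  have h := convexOn_exp.2 (Set.mem_univ (0:ℝ)) (Set.mem_univ (Real.log 2))
    (by linarith : (0:ℝ) ≤ 1 - t) ht0 (by ring)
  simp only [smul_eq_mul, mul_zero, zero_add, Real.exp_zero] at h
  rw [Real.exp_log (by norm_num : (0:ℝ) < 2)] at h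
  linarith

theorem stmt_4 (x μ : ℝ) (hx0 : 0 ≤ x) (hx1 : x ≤ 1) (hμ : 1 ≤ μ) :
    1 + (μ * (μ - 1) / (μ + 1)) * x ≤ (1 + x) ^ (μ - 1) := by
  have hμ1 : 0 < μ + 1 := by linarith
  rcases le_or_gt 2 μ with h2 | h2
  · have hb := one_add_mul_self_le_rpow_one_add (by linarith : (-1:ℝ) ≤ x)
      (by linarith : 1 ≤ μ - 1)
    have hc : μ * (μ - 1) / (μ + 1) ≤ μ - 1 := by
      rw [div_le_iff₀ hμ1]; nlinarith
    nlinarith [mul_le_mul_of_nonneg_right hc hx0]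
  · -- 1 ≤ μ < 2
    have h1x : (0:ℝ) < 1 + x := by linarith
    have hlog : x * Real.log 2 ≤ Real.log (1 + x) := by
      have := exp_chord x hx0 hx1
      calc x * Real.log 2 = Real.log (Real.exp (x * Real.log 2)) := (Real.log_exp _).symm
        _ ≤ Real.log (1 + x) := Real.log_le_log (Real.exp_pos _) this
    have hrw : (1 + x) ^ (μ - 1) = Real.exp ((μ - 1) * Real.log (1 + x)) := by
      rw [Real.rpow_def_of_pos h1x, mul_comm]
    rw [hrw]
    have hexp : 1 + (μ - 1) * Real.log (1 + x) ≤ Real.exp ((μ - 1) * Real.log (1 + x)) :=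
      Real.add_one_le_exp _ |>.trans_eq' (by ring)
    have hs : 0 ≤ μ - 1 := by linarith
    have hmono : (μ - 1) * (x * Real.log 2) ≤ (μ - 1) * Real.log (1 + x) :=
      mul_le_mul_of_nonneg_left hlog hs
    have hl2 : (0.6931471803 : ℝ) < Real.log 2 := Real.log_two_gt_d9
    have hcoef : μ * (μ - 1) / (μ + 1) * x ≤ (μ - 1) * (x * Real.log 2) := by
      have hpos : 0 ≤ (μ + 1) * Real.log 2 - μ := by nlinarith
      have key : 0 ≤ (μ - 1) * x * ((μ + 1) * Real.log 2 - μ) :=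
        mul_nonneg (mul_nonneg hs hx0) hpos
      rw [div_mul_eq_mul_div, div_le_iff₀ hμ1]
      nlinarith [key]
    linarith
end

section
/- Let g_q(x) = (1/(q−1))·[1 − ((1+√(1−x))/2)^q − ((1−√(1−x))/2)^q] for 0 ≤ x ≤ 1 and q > 1. Then for 2 ≤ q ≤ 3, g_q is monotonically nondecreasing on [0,1]. -/
/-! Writing `p = (1 + √(1 - x)) / 2`, the function is `(1 - p ^ q - (1 - p) ^ q) / (q - 1)`; as `x`
increases, `p` decreases from `1` to `1/2`, and on `[1/2, 1]` the map `p ↦ p ^ q + (1 - p) ^ q` is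
increasing because its derivative `q (p ^ (q - 1) - (1 - p) ^ (q - 1))` is nonnegative there. -/

open Set

lemma hasDerivAt_rpow_add_one_sub_rpow {q : ℝ} (hq : 1 ≤ q) (u : ℝ) :
    HasDerivAt (fun u : ℝ => u ^ q + (1 - u) ^ q)
      (q * u ^ (q - 1) - q * (1 - u) ^ (q - 1)) u := by
  have hpow := (hasDerivAt_id' u).rpow_const (p := q) (Or.inr hq)
  have hpow_sub := ((hasDerivAt_id' u).const_sub 1).rpow_const (p := q) (Or.inr hq)
  exact (hpow.add hpow_sub).congr_deriv (by ring)

lemma monotoneOn_rpow_add_one_sub_rpow {q : ℝ} (hq : 1 ≤ q) :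
    MonotoneOn (fun u : ℝ => u ^ q + (1 - u) ^ q) (Icc (1 / 2) 1) := by
  have hder := hasDerivAt_rpow_add_one_sub_rpow hq
  refine monotoneOn_of_deriv_nonneg (convex_Icc _ _)
    (fun u _ => (hder u).continuousAt.continuousWithinAt)
    (fun u _ => (hder u).differentiableAt.differentiableWithinAt) fun u hu => ?_
  rw [interior_Icc, mem_Ioo] at hu
  have hle : (1 - u) ^ (q - 1) ≤ u ^ (q - 1) :=
    Real.rpow_le_rpow (by linarith) (by linarith) (by linarith)
  rw [(hder u).deriv, ← mul_sub]
  exact mul_nonneg (by linarith) (sub_nonneg.mpr hle)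

lemma antitoneOn_one_add_sqrt_one_sub_div_two :
    AntitoneOn (fun x : ℝ => (1 + √(1 - x)) / 2) (Icc 0 1) := fun x _ y _ hxy => by
  have := Real.sqrt_le_sqrt (sub_le_sub_left hxy 1)
  dsimp only
  linarith

lemma mapsTo_one_add_sqrt_one_sub_div_two :
    MapsTo (fun x : ℝ => (1 + √(1 - x)) / 2) (Icc 0 1) (Icc (1 / 2) 1) := fun x hx => by
  have h0 := Real.sqrt_nonneg (1 - x)
  have h1 : √(1 - x) ≤ 1 := Real.sqrt_le_one.mpr (by linarith [hx.1])
  constructor <;> linarith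

theorem stmt_6_general (q : ℝ) (hq2 : 2 ≤ q) :
    MonotoneOn (fun x : ℝ =>
      (1 / (q - 1)) * (1 - ((1 + Real.sqrt (1 - x)) / 2) ^ q
        - ((1 - Real.sqrt (1 - x)) / 2) ^ q))
      (Set.Icc (0 : ℝ) 1) := by
  intro x hx y hy hxy
  have hsum := (monotoneOn_rpow_add_one_sub_rpow (by linarith : (1 : ℝ) ≤ q)).comp_AntitoneOn
    antitoneOn_one_add_sqrt_one_sub_div_two mapsTo_one_add_sqrt_one_sub_div_two hx hy hxy
  simp only [Function.comp, show ∀ s : ℝ, 1 - (1 + s) / 2 = (1 - s) / 2 by intro; ring] at hsum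
  exact mul_le_mul_of_nonneg_left (by linarith) (div_nonneg zero_le_one (by linarith))

theorem stmt_6 (q : ℝ) (hq2 : 2 ≤ q) (hq3 : q ≤ 3) :
    MonotoneOn (fun x : ℝ =>
      (1 / (q - 1)) * (1 - ((1 + Real.sqrt (1 - x)) / 2) ^ q
        - ((1 - Real.sqrt (1 - x)) / 2) ^ q))
      (Set.Icc (0 : ℝ) 1) :=
  stmt_6_general q hq2
end

section
/- Let g_q(x) = (1/(q−1))·[1 − ((1+√(1−x))/2)^q − ((1−√(1−x))/2)^q] for 0 ≤ x ≤ 1 and q > 1. Then for 2 ≤ q ≤ 3, g_q is convex on [0,1]. -/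
/-!
Write `s = √(1 - x)`, so that `g_q` is the Tsallis-`q` entropy of the distribution
`((1 + s) / 2, (1 - s) / 2)`. Differentiating through `s` gives
`g_q'(x) = q / (4 (q - 1)) · φ(s) / s` with `φ(s) = ((1 + s) / 2)^(q-1) - ((1 - s) / 2)^(q-1)`.
For `p = q - 1 ∈ [1, 2]`, `φ''` has the sign of
`((1 + s) / 2)^(p-2) - ((1 - s) / 2)^(p-2) ≤ 0`, so `φ` is concave on `[0, 1]` with `φ(0) = 0`.
Hence `φ(s) / s`, the slope of the secant through the origin, decreases in `s`; as `s`
decreases in `x`, `g_q'` is monotone.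
-/

open Real Set

lemma hasDerivAt_half_one_add_rpow (r : ℝ) {s : ℝ} (hs : -1 < s) :
    HasDerivAt (fun s : ℝ => ((1 + s) / 2) ^ r) (r / 2 * ((1 + s) / 2) ^ (r - 1)) s := by
  have h := (((hasDerivAt_id' s).const_add 1).div_const 2).rpow_const (p := r)
    (Or.inl (by linarith))
  exact h.congr_deriv (by ring)

lemma hasDerivAt_half_one_sub_rpow (r : ℝ) {s : ℝ} (hs : s < 1) :
    HasDerivAt (fun s : ℝ => ((1 - s) / 2) ^ r) (-(r / 2 * ((1 - s) / 2) ^ (r - 1))) s := by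
  have h := (((hasDerivAt_id' s).const_sub 1).div_const 2).rpow_const (p := r)
    (Or.inl (by linarith))
  exact h.congr_deriv (by ring)

lemma concaveOn_half_one_add_rpow_sub {p : ℝ} (hp1 : 1 ≤ p) (hp2 : p ≤ 2) :
    ConcaveOn ℝ (Icc 0 1) fun s : ℝ => ((1 + s) / 2) ^ p - ((1 - s) / 2) ^ p := by
  refine concaveOn_of_hasDerivWithinAt2_nonpos (convex_Icc 0 1)
    (f' := fun s => p / 2 * (((1 + s) / 2) ^ (p - 1) + ((1 - s) / 2) ^ (p - 1)))
    (f'' := fun s => p / 2 * ((p - 1) / 2 * (((1 + s) / 2) ^ (p - 2) - ((1 - s) / 2) ^ (p - 2))))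
    ?_ ?_ ?_ ?_
  · fun_prop (disch := linarith)
  all_goals rw [interior_Icc]; rintro s ⟨hs0, hs1⟩
  · refine ((hasDerivAt_half_one_add_rpow p (by linarith)).sub
      (hasDerivAt_half_one_sub_rpow p hs1)).hasDerivWithinAt.congr_deriv ?_
    ring
  · have h := ((hasDerivAt_half_one_add_rpow (p - 1) (by linarith)).add
      (hasDerivAt_half_one_sub_rpow (p - 1) hs1)).const_mul (p / 2)
    refine h.hasDerivWithinAt.congr_deriv ?_
    rw [show p - 1 - 1 = p - 2 by ring]
    ring
  · have hpow : ((1 + s) / 2) ^ (p - 2) ≤ ((1 - s) / 2) ^ (p - 2) :=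
      rpow_le_rpow_of_nonpos (by linarith) (by linarith) (by linarith)
    exact mul_nonpos_of_nonneg_of_nonpos (by linarith)
      (mul_nonpos_of_nonneg_of_nonpos (by linarith) (by linarith))

lemma antitoneOn_half_one_add_rpow_sub_div {p : ℝ} (hp1 : 1 ≤ p) (hp2 : p ≤ 2) :
    AntitoneOn (fun s : ℝ => (((1 + s) / 2) ^ p - ((1 - s) / 2) ^ p) / s) (Ioc 0 1) := by
  have h := (concaveOn_half_one_add_rpow_sub hp1 hp2).antitoneOn_slope_gt
    (left_mem_Icc.mpr zero_le_one)
  refine (h.mono fun s hs => ⟨⟨hs.1.le, hs.2⟩, hs.1⟩).congr fun s _ => ?_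
  simp [slope_def_field]

lemma hasDerivAt_tsallis_of_sqrt_one_sub {q x : ℝ} (hq : 1 < q) (hx : x ∈ Ioo 0 1) :
    HasDerivAt (fun x : ℝ =>
      (1 / (q - 1)) * (1 - ((1 + √(1 - x)) / 2) ^ q - ((1 - √(1 - x)) / 2) ^ q))
      (q / (4 * (q - 1)) *
        ((((1 + √(1 - x)) / 2) ^ (q - 1) - ((1 - √(1 - x)) / 2) ^ (q - 1)) / √(1 - x))) x := by
  obtain ⟨hx0, hx1⟩ := hx
  have hs0 : 0 < √(1 - x) := sqrt_pos.mpr (by linarith)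
  have hs1 : √(1 - x) < 1 := by rw [sqrt_lt' one_pos]; linarith
  have hsqrt : HasDerivAt (fun x : ℝ => √(1 - x)) (-1 / (2 * √(1 - x))) x :=
    ((hasDerivAt_id' x).const_sub 1).sqrt (by linarith)
  have h := (((hasDerivAt_half_one_add_rpow q (by linarith)).comp x hsqrt).const_sub 1 |>.sub
    ((hasDerivAt_half_one_sub_rpow q hs1).comp x hsqrt)).const_mul (1 / (q - 1))
  refine h.congr_deriv ?_
  have : q - 1 ≠ 0 := by linarith
  field_simp
  ring

theorem stmt_7 (q : ℝ) (hq2 : 2 ≤ q) (hq3 : q ≤ 3) :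
    ConvexOn ℝ (Set.Icc (0 : ℝ) 1) (fun x : ℝ =>
      (1 / (q - 1)) * (1 - ((1 + Real.sqrt (1 - x)) / 2) ^ q
        - ((1 - Real.sqrt (1 - x)) / 2) ^ q)) := by
  have hq1 : 1 < q := by linarith
  have hg' {x : ℝ} (hx : x ∈ Ioo 0 1) := hasDerivAt_tsallis_of_sqrt_one_sub hq1 hx
  have hsqrt_mem {x : ℝ} (hx : x ∈ Ioo 0 1) : √(1 - x) ∈ Ioc 0 1 :=
    ⟨sqrt_pos.mpr (by linarith [hx.2]), sqrt_le_one.mpr (by linarith [hx.1])⟩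
  refine MonotoneOn.convexOn_of_deriv (convex_Icc 0 1) (by fun_prop (disch := linarith)) ?_ ?_
    <;> rw [interior_Icc]
  · exact fun x hx => (hg' hx).differentiableAt.differentiableWithinAt
  · intro x hx y hy hxy
    rw [(hg' hx).deriv, (hg' hy).deriv]
    refine mul_le_mul_of_nonneg_left ?_ (div_nonneg (by linarith) (by linarith))
    exact antitoneOn_half_one_add_rpow_sub_div (p := q - 1) (by linarith) (by linarith)
      (hsqrt_mem hy) (hsqrt_mem hx) (sqrt_le_sqrt (by linarith))
end

section
/- Let g_q(x) = (1/(q−1))·[1 − ((1+√(1−x))/2)^q − ((1−√(1−x))/2)^q]. For 2 ≤ q ≤ 3 and real numbers x, y ≥ 0 with x² + y² ≤ 1, g_q(x² + y²) ≥ g_q(x²) + g_q(y²). -/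
/-!
Write `G = traceRpow q`, i.e. `G m = ((1 + √m) / 2) ^ q + ((1 - √m) / 2) ^ q`. Then
`g_q t = (1 - G (1 - t)) / (q - 1)` and `G 1 = 1`, so the claim becomes
`G (1 - x² - y²) + G 1 ≤ G (1 - x²) + G (1 - y²)`, which holds because `G` is concave on
`[0, 1]`. Its derivative at `m` is `q / 4 · ψ (√m)` with
`ψ s = (((1 + s) / 2) ^ (q - 1) - ((1 - s) / 2) ^ (q - 1)) / s`. This `ψ` is decreasing because,
for `1 ≤ r ≤ 2`, the trapezoid rule underestimates `∫_b^a r t ^ (r - 1) dt`, the integrand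
being concave.
-/

open Real Set

lemma rpow_le_tangent_of_le_one {e x y : ℝ} (he0 : 0 ≤ e) (he1 : e ≤ 1) (hy : 0 ≤ y)
    (hx : 0 < x) : y ^ e ≤ x ^ e + e * x ^ (e - 1) * (y - x) := by
  have bernoulli : (y / x) ^ e ≤ 1 + e * (y / x - 1) := by
    simpa using rpow_one_add_le_one_add_mul_self (s := y / x - 1)
      (by linarith [div_nonneg hy hx.le]) he0 he1
  calc y ^ e = x ^ e * (y / x) ^ e := by
        rw [← mul_rpow hx.le (div_nonneg hy hx.le), mul_div_cancel₀ _ hx.ne']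
    _ ≤ x ^ e * (1 + e * (y / x - 1)) := by gcongr
    _ = x ^ e + e * x ^ (e - 1) * (y - x) := by
        rw [rpow_sub_one hx.ne']
        field_simp

lemma trapezoid_le_rpow_sub_rpow {r a b : ℝ} (hr1 : 1 ≤ r) (hr2 : r ≤ 2) (hb : 0 < b)
    (hba : b ≤ a) : r / 2 * (a - b) * (a ^ (r - 1) + b ^ (r - 1)) ≤ a ^ r - b ^ r := by
  set f : ℝ → ℝ := fun t => t ^ r - b ^ r - r / 2 * ((t - b) * (t ^ (r - 1) + b ^ (r - 1)))
  set f' : ℝ → ℝ := fun t =>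
    r / 2 * (t ^ (r - 1) - b ^ (r - 1) - (r - 1) * t ^ (r - 1 - 1) * (t - b))
  have hf : ∀ t ∈ Ici b, HasDerivAt f (f' t) t := by
    intro t ht
    have ht0 : t ≠ 0 := (hb.trans_le ht).ne'
    have hpow := hasDerivAt_rpow_const (p := r) (Or.inl ht0)
    have hpow' := hasDerivAt_rpow_const (p := r - 1) (Or.inl ht0)
    have hprod := ((hasDerivAt_id' t).sub_const b).mul (hpow'.add_const (b ^ (r - 1)))
    exact ((hpow.sub_const (b ^ r)).sub (hprod.const_mul (r / 2))).congr_deriv (by ring)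
  have hmono : MonotoneOn f (Ici b) := by
    refine monotoneOn_of_hasDerivWithinAt_nonneg (convex_Ici b)
      (fun t ht => (hf t ht).continuousAt.continuousWithinAt)
      (fun t ht => (hf t (interior_subset ht)).hasDerivWithinAt) fun t ht => ?_
    rw [interior_Ici] at ht
    have htangent := rpow_le_tangent_of_le_one (e := r - 1) (by linarith) (by linarith) hb.le
      (hb.trans ht)
    simp only [f']
    nlinarith
  have := hmono (mem_Ici.2 le_rfl) hba hba
  simp only [f, sub_self, zero_mul, mul_zero] at this
  linarith

lemma antitoneOn_rpow_sub_rpow_div {p : ℝ} (hp1 : 1 ≤ p) (hp2 : p ≤ 2) :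
    AntitoneOn (fun s : ℝ => (((1 + s) / 2) ^ p - ((1 - s) / 2) ^ p) / s) (Ioo 0 1) := by
  set N : ℝ → ℝ := fun s => ((1 + s) / 2) ^ p - ((1 - s) / 2) ^ p
  set N' : ℝ → ℝ := fun s => p / 2 * (((1 + s) / 2) ^ (p - 1) + ((1 - s) / 2) ^ (p - 1))
  have hN : ∀ s, HasDerivAt N (N' s) s := by
    intro s
    have hplus := (hasDerivAt_rpow_const (p := p) (Or.inr hp1)).comp s
      (((hasDerivAt_id' s).const_add 1).div_const 2)
    have hminus := (hasDerivAt_rpow_const (p := p) (Or.inr hp1)).comp s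
      (((hasDerivAt_id' s).const_sub 1).div_const 2)
    exact (hplus.sub hminus).congr_deriv (by simp only [N']; ring)
  have hψ : ∀ s ∈ Ioo (0 : ℝ) 1,
      HasDerivAt (fun s => N s / s) ((N' s * s - N s) / s ^ 2) s :=
    fun s hs => ((hN s).div (hasDerivAt_id' s) hs.1.ne').congr_deriv (by ring)
  refine antitoneOn_of_hasDerivWithinAt_nonpos (convex_Ioo 0 1)
    (fun s hs => (hψ s hs).continuousAt.continuousWithinAt)
    (fun s hs => (hψ s (interior_subset hs)).hasDerivWithinAt) fun s hs => ?_
  rw [interior_Ioo] at hs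
  have htrapezoid :=
    trapezoid_le_rpow_sub_rpow (r := p) (a := (1 + s) / 2) (b := (1 - s) / 2) hp1 hp2
      (by linarith [hs.2]) (by linarith [hs.1])
  refine div_nonpos_of_nonpos_of_nonneg ?_ (sq_nonneg s)
  simp only [N, N']
  nlinarith

/-- `tr ρ ^ q` for a qubit state `ρ` with eigenvalues `(1 ± √m) / 2`. -/
noncomputable def traceRpow (q m : ℝ) : ℝ := ((1 + √m) / 2) ^ q + ((1 - √m) / 2) ^ q

lemma traceRpow_one {q : ℝ} (hq : q ≠ 0) : traceRpow q 1 = 1 := by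
  simp [traceRpow, zero_rpow hq]

lemma continuous_traceRpow {q : ℝ} (hq : 0 ≤ q) : Continuous (traceRpow q) := by
  unfold traceRpow
  fun_prop (disch := exact hq)

lemma hasDerivAt_traceRpow {q m : ℝ} (hq : 1 ≤ q) (hm : 0 < m) :
    HasDerivAt (traceRpow q)
      (q / 4 * ((((1 + √m) / 2) ^ (q - 1) - ((1 - √m) / 2) ^ (q - 1)) / √m)) m := by
  have hsqrt := hasDerivAt_sqrt hm.ne'
  have hplus := (hasDerivAt_rpow_const (p := q) (Or.inr hq)).comp m
    ((hsqrt.const_add 1).div_const 2)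
  have hminus := (hasDerivAt_rpow_const (p := q) (Or.inr hq)).comp m
    ((hsqrt.const_sub 1).div_const 2)
  refine (hplus.add hminus).congr_deriv ?_
  field_simp
  ring

lemma concaveOn_traceRpow {q : ℝ} (hq2 : 2 ≤ q) (hq3 : q ≤ 3) :
    ConcaveOn ℝ (Icc 0 1) (traceRpow q) := by
  have hderiv : ∀ m ∈ interior (Icc (0 : ℝ) 1), HasDerivAt (traceRpow q) _ m := fun m hm =>
    hasDerivAt_traceRpow (by linarith) (interior_Icc.subset hm).1
  refine AntitoneOn.concaveOn_of_deriv (convex_Icc 0 1)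
    (continuous_traceRpow (by linarith)).continuousOn
    (fun m hm => (hderiv m hm).differentiableAt.differentiableWithinAt) ?_
  intro a ha b hb hab
  rw [(hderiv a ha).deriv, (hderiv b hb).deriv]
  rw [interior_Icc] at ha hb
  have hsqrt_mem : ∀ m ∈ Ioo (0 : ℝ) 1, √m ∈ Ioo (0 : ℝ) 1 := fun m hm =>
    ⟨sqrt_pos.2 hm.1, (sqrt_lt' one_pos).2 (by simpa using hm.2)⟩
  exact mul_le_mul_of_nonneg_left (antitoneOn_rpow_sub_rpow_div (p := q - 1) (by linarith)
    (by linarith) (hsqrt_mem a ha) (hsqrt_mem b hb) (sqrt_le_sqrt hab)) (by linarith)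

lemma ConcaveOn.add_le_add_of_add_eq {s : Set ℝ} {f : ℝ → ℝ} (hf : ConcaveOn ℝ s f)
    {x z a b : ℝ} (hx : x ∈ s) (hz : z ∈ s) (hxa : x ≤ a) (hxb : x ≤ b)
    (hab : a + b = x + z) :
    f x + f z ≤ f a + f b := by
  rcases hxa.eq_or_lt with rfl | hxa'
  · obtain rfl : b = z := by linarith
    exact le_rfl
  have hxz : 0 < z - x := by linarith
  set t := (z - a) / (z - x)
  have ht0 : 0 ≤ t := div_nonneg (by linarith) hxz.le
  have ht1 : 0 ≤ 1 - t := by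
    rw [sub_nonneg, div_le_one hxz]
    linarith
  have ha : t • x + (1 - t) • z = a := by
    simp only [t, smul_eq_mul]
    field_simp
    ring
  have hb : (1 - t) • x + t • z = b := by
    simp only [t, smul_eq_mul]
    field_simp
    linear_combination (x - z) * hab
  have h1 := hf.2 hx hz ht0 ht1 (by ring)
  have h2 := hf.2 hx hz ht1 ht0 (by ring)
  rw [ha] at h1
  rw [hb] at h2
  simp only [smul_eq_mul] at h1 h2
  linarith

theorem stmt_8_general (q : ℝ) (hq2 : 2 ≤ q) (hq3 : q ≤ 3) (x y : ℝ)
    (hxy : x ^ 2 + y ^ 2 ≤ 1)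
    (g : ℝ → ℝ)
    (hg : ∀ t, g t = (1 / (q - 1)) * (1 - ((1 + Real.sqrt (1 - t)) / 2) ^ q
      - ((1 - Real.sqrt (1 - t)) / 2) ^ q)) :
    g (x ^ 2 + y ^ 2) ≥ g (x ^ 2) + g (y ^ 2) := by
  have hg' : ∀ t, g t = (1 - traceRpow q (1 - t)) / (q - 1) := fun t => by
    rw [hg, traceRpow]; ring
  have key : traceRpow q (1 - (x ^ 2 + y ^ 2)) + traceRpow q 1 ≤
      traceRpow q (1 - x ^ 2) + traceRpow q (1 - y ^ 2) :=
    (concaveOn_traceRpow hq2 hq3).add_le_add_of_add_eq ⟨by linarith, by nlinarith⟩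
      ⟨zero_le_one, le_rfl⟩ (by nlinarith) (by nlinarith) (by ring)
  rw [traceRpow_one (by linarith)] at key
  rw [ge_iff_le, hg', hg', hg', ← add_div]
  exact div_le_div_of_nonneg_right (by linarith) (by linarith)

theorem stmt_8 (q : ℝ) (hq2 : 2 ≤ q) (hq3 : q ≤ 3) (x y : ℝ)
    (hx : 0 ≤ x) (hy : 0 ≤ y) (hxy : x ^ 2 + y ^ 2 ≤ 1)
    (g : ℝ → ℝ)
    (hg : ∀ t, g t = (1 / (q - 1)) * (1 - ((1 + Real.sqrt (1 - t)) / 2) ^ q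
      - ((1 - Real.sqrt (1 - t)) / 2) ^ q)) :
    g (x ^ 2 + y ^ 2) ≥ g (x ^ 2) + g (y ^ 2) :=
  stmt_8_general q hq2 hq3 x y hxy g hg
end

section
/- Let g_q be as above and suppose 2 ≤ q ≤ 3, μ ≥ 1, and x, y ∈ [0,1] with x ≥ y and x² + y² ≤ 1. Then g_q(x²+y²)^μ ≥ g_q(x²)^μ + (μ²/(μ+1))·g_q(x²)^(μ−1)·g_q(y²) + (2^μ − μ²/(μ+1) − 1)·g_q(y²)^μ. -/
/-!
`g_q` is convex on `[0, 1]` with `g_q 0 = 0`, hence superadditive, nonnegative and nondecreasing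
there: with `u = √(1 - t)`, `g_q' t` is a positive multiple of the divided difference
`(((1 + u) / 2) ^ (q - 1) - ((1 - u) / 2) ^ (q - 1)) / u`, which decreases in `u` by the
trapezoid rule for the concave function `s ↦ s ^ (q - 2)`.

For `a = g_q (x²) ≥ b = g_q (y²) ≥ 0`, superadditivity reduces the claim to
`(a + b) ^ μ ≥ a ^ μ + c₁ a ^ (μ - 1) b + c₂ b ^ μ`, i.e. to `H t ≥ 0` on `[0, 1]` for
`H t = (1 + t) ^ μ - 1 - c₁ t - c₂ t ^ μ`. Now `H 0 = H 1 = 0`, `H' 0 ≥ 0 ≥ H' 1`, and `H''` has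
the sign of `(1 + 1/t) ^ (μ - 2) - c₂`, which changes sign at most once. So `H` is convex then
concave (`μ ≥ 2`) or concave then convex (`μ ≤ 2`), and nonnegative in both cases.
-/

open Real Set

theorem ConvexOn.le_of_hasDerivAt_left_nonneg {f : ℝ → ℝ} {a b f' x : ℝ}
    (hf : ConvexOn ℝ (Icc a b) f) (hd : HasDerivAt f f' a) (hf' : 0 ≤ f')
    (hx : x ∈ Icc a b) : f a ≤ f x := by
  rcases hx.1.eq_or_lt with rfl | hax
  · rfl
  have hslope := hf.le_slope_of_hasDerivAt (left_mem_Icc.2 (hax.le.trans hx.2)) hx hax hd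
  rw [slope_def_field, le_div_iff₀ (sub_pos.2 hax)] at hslope
  nlinarith

theorem ConvexOn.le_of_hasDerivAt_right_nonpos {f : ℝ → ℝ} {a b f' x : ℝ}
    (hf : ConvexOn ℝ (Icc a b) f) (hd : HasDerivAt f f' b) (hf' : f' ≤ 0)
    (hx : x ∈ Icc a b) : f b ≤ f x := by
  rcases hx.2.eq_or_lt with rfl | hxb
  · rfl
  have hslope := hf.slope_le_of_hasDerivAt hx (right_mem_Icc.2 (hx.1.trans hxb.le)) hxb hd
  rw [slope_def_field, div_le_iff₀ (sub_pos.2 hxb)] at hslope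
  nlinarith

theorem ConcaveOn.nonneg_of_endpoints {f : ℝ → ℝ} {a b x : ℝ}
    (hf : ConcaveOn ℝ (Icc a b) f) (ha : 0 ≤ f a) (hb : 0 ≤ f b) (hx : x ∈ Icc a b) :
    0 ≤ f x := by
  have hab : a ≤ b := hx.1.trans hx.2
  exact (le_min ha hb).trans <| hf.ge_on_segment (left_mem_Icc.2 hab) (right_mem_Icc.2 hab)
    (by rwa [segment_eq_Icc hab])

theorem ConvexOn.add_le_of_map_zero {f : ℝ → ℝ} {c s t : ℝ} (hf : ConvexOn ℝ (Icc 0 c) f)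
    (hf₀ : f 0 = 0) (hs : 0 ≤ s) (ht : 0 ≤ t) (hst : s + t ≤ c) : f s + f t ≤ f (s + t) := by
  rcases (add_nonneg hs ht).eq_or_lt with hst₀ | hpos
  · obtain ⟨rfl, rfl⟩ : s = 0 ∧ t = 0 := ⟨by linarith, by linarith⟩
    simp [hf₀]
  have hmem : s + t ∈ Icc 0 c := ⟨hpos.le, hst⟩
  have hmem₀ : (0 : ℝ) ∈ Icc 0 c := ⟨le_rfl, hpos.le.trans hst⟩
  have key : ∀ a, 0 ≤ a → a ≤ s + t → f a ≤ a / (s + t) * f (s + t) := fun a ha has => by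
    have := hf.2 hmem hmem₀ (div_nonneg ha hpos.le) (sub_nonneg.2 ((div_le_one hpos).2 has))
      (by ring)
    simpa only [smul_eq_mul, mul_zero, add_zero, hf₀, div_mul_cancel₀ _ hpos.ne'] using this
  have hsum : s / (s + t) * f (s + t) + t / (s + t) * f (s + t) = f (s + t) := by
    rw [← add_mul, ← add_div, div_self hpos.ne', one_mul]
  linarith [key s hs (by linarith), key t ht (by linarith)]

theorem AntitoneOn.exists_crossing {φ : ℝ → ℝ} {a b : ℝ} (hab : a ≤ b)
    (hφ : AntitoneOn φ (Ioo a b)) (c : ℝ) :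
    ∃ τ ∈ Icc a b, (∀ x ∈ Ioo a τ, c ≤ φ x) ∧ ∀ x ∈ Ioo τ b, φ x ≤ c := by
  set S := insert a {x | x ∈ Ioo a b ∧ c < φ x}
  have hS_le : ∀ x ∈ S, x ≤ b := by
    rintro x (rfl | hx)
    exacts [hab, hx.1.2.le]
  have hbdd : BddAbove S := ⟨b, hS_le⟩
  have hne : S.Nonempty := ⟨a, mem_insert _ _⟩
  refine ⟨sSup S, ⟨le_csSup hbdd (mem_insert _ _), csSup_le hne hS_le⟩, ?_, ?_⟩
  · intro x hx
    obtain ⟨s, hs, hxs⟩ := exists_lt_of_lt_csSup hne hx.2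
    rcases hs with rfl | ⟨hs, hcs⟩
    · exact absurd hx.1 hxs.not_gt
    · exact hcs.le.trans (hφ ⟨hx.1, hxs.trans hs.2⟩ hs hxs.le)
  · intro x hx
    by_contra! hcx
    have ha : a < x := (le_csSup hbdd (mem_insert _ _)).trans_lt hx.1
    exact hx.1.not_ge (le_csSup hbdd (mem_insert_of_mem _ ⟨⟨ha, hx.2⟩, hcx⟩))

theorem sq_add_one_le_mul_two_rpow {μ : ℝ} (hμ : 1 ≤ μ) :
    μ ^ 2 + 1 ≤ (μ + 1) * 2 ^ (μ - 1) := by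
  set s := μ - 1
  set L := log 2
  have hL : 0.6931471803 < L := log_two_gt_d9
  have hs : 0 ≤ s := sub_nonneg.2 hμ
  have hexp : 1 + s * L + (s * L) ^ 2 / 2 ≤ (2 : ℝ) ^ s := by
    rw [rpow_def_of_pos two_pos, mul_comm L]
    exact quadratic_le_exp_of_nonneg (by positivity)
  rw [show μ = s + 1 by ring]
  nlinarith [mul_le_mul_of_nonneg_left hexp (by linarith : 0 ≤ s + 2),
    mul_nonneg hs (by linarith : 0 ≤ 2 * L - 1),
    mul_nonneg (sq_nonneg s) (by nlinarith : 0 ≤ L + L ^ 2 - 1),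
    mul_nonneg (pow_nonneg hs 3) (sq_nonneg L)]

noncomputable def powGap (μ x : ℝ) : ℝ :=
  (1 + x) ^ μ - 1 - μ ^ 2 / (μ + 1) * x - (2 ^ μ - μ ^ 2 / (μ + 1) - 1) * x ^ μ

noncomputable def powGapDeriv (μ x : ℝ) : ℝ :=
  μ * (1 + x) ^ (μ - 1) - μ ^ 2 / (μ + 1) - (2 ^ μ - μ ^ 2 / (μ + 1) - 1) * (μ * x ^ (μ - 1))

noncomputable def powGapDeriv2 (μ x : ℝ) : ℝ :=
  μ * (μ - 1) * x ^ (μ - 2) * ((1 + x⁻¹) ^ (μ - 2) - (2 ^ μ - μ ^ 2 / (μ + 1) - 1))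

theorem antitoneOn_one_add_inv_rpow {e : ℝ} (he : 0 ≤ e) :
    AntitoneOn (fun x : ℝ => (1 + x⁻¹) ^ e) (Ioi 0) := fun x hx y hy hxy =>
  rpow_le_rpow (by positivity [hy.out]) (by gcongr) he

theorem monotoneOn_one_add_inv_rpow {e : ℝ} (he : e ≤ 0) :
    MonotoneOn (fun x : ℝ => (1 + x⁻¹) ^ e) (Ioi 0) := fun x hx y hy hxy =>
  rpow_le_rpow_of_nonpos (by positivity [hy.out]) (by gcongr) he

section powGap

variable {μ : ℝ}

theorem powGap_zero (hμ : 0 < μ) : powGap μ 0 = 0 := by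
  simp [powGap, zero_rpow hμ.ne']

theorem powGap_one : powGap μ 1 = 0 := by
  simp only [powGap, one_rpow, one_add_one_eq_two]
  ring

theorem hasDerivAt_powGap (hμ : 1 ≤ μ) {x : ℝ} (hx : 0 ≤ x) :
    HasDerivAt (powGap μ) (powGapDeriv μ x) x := by
  have h1 : HasDerivAt (fun y : ℝ => (1 + y) ^ μ) (μ * (1 + x) ^ (μ - 1)) x := by
    simpa using ((hasDerivAt_id x).const_add 1).rpow_const (Or.inl (by positivity))
  have h2 : HasDerivAt (fun y : ℝ => y ^ μ) (μ * x ^ (μ - 1)) x :=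
    hasDerivAt_rpow_const (Or.inr hμ)
  exact (((h1.sub_const 1).sub ((hasDerivAt_id x).const_mul _)).sub (h2.const_mul _)).congr_deriv
    (by simp [powGapDeriv])

theorem hasDerivAt_powGapDeriv {x : ℝ} (hx : 0 < x) :
    HasDerivAt (powGapDeriv μ) (powGapDeriv2 μ x) x := by
  have h1 : HasDerivAt (fun y : ℝ => (1 + y) ^ (μ - 1)) ((μ - 1) * (1 + x) ^ (μ - 1 - 1)) x := by
    simpa using ((hasDerivAt_id x).const_add 1).rpow_const (Or.inl (by positivity))
  have h2 : HasDerivAt (fun y : ℝ => y ^ (μ - 1)) ((μ - 1) * x ^ (μ - 1 - 1)) x :=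
    hasDerivAt_rpow_const (Or.inl hx.ne')
  have hsplit : (1 + x) ^ (μ - 2) = (1 + x⁻¹) ^ (μ - 2) * x ^ (μ - 2) := by
    rw [← mul_rpow (by positivity) hx.le, add_mul, inv_mul_cancel₀ hx.ne', one_mul, add_comm]
  refine (((h1.const_mul μ).sub_const _).sub ((h2.const_mul μ).const_mul _)).congr_deriv ?_
  rw [powGapDeriv2, show μ - 1 - 1 = μ - 2 by ring, hsplit]
  ring

theorem convexOn_powGap (hμ : 1 ≤ μ) {a b : ℝ} (ha : 0 ≤ a)
    (h : ∀ x ∈ Ioo a b, 2 ^ μ - μ ^ 2 / (μ + 1) - 1 ≤ (1 + x⁻¹) ^ (μ - 2)) :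
    ConvexOn ℝ (Icc a b) (powGap μ) := by
  refine convexOn_of_hasDerivWithinAt2_nonneg (f' := powGapDeriv μ) (f'' := powGapDeriv2 μ)
    (convex_Icc a b)
    (fun x hx => (hasDerivAt_powGap hμ (ha.trans hx.1)).continuousAt.continuousWithinAt)
    ?_ ?_ ?_ <;> simp only [interior_Icc] <;> intro x hx
  · exact (hasDerivAt_powGap hμ (ha.trans hx.1.le)).hasDerivWithinAt
  · exact (hasDerivAt_powGapDeriv (ha.trans_lt hx.1)).hasDerivWithinAt
  · have := rpow_nonneg (ha.trans hx.1.le) (μ - 2)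
    have := sub_nonneg.2 (h x hx)
    have : 0 ≤ μ * (μ - 1) := by nlinarith
    unfold powGapDeriv2
    positivity

theorem concaveOn_powGap (hμ : 1 ≤ μ) {a b : ℝ} (ha : 0 ≤ a)
    (h : ∀ x ∈ Ioo a b, (1 + x⁻¹) ^ (μ - 2) ≤ 2 ^ μ - μ ^ 2 / (μ + 1) - 1) :
    ConcaveOn ℝ (Icc a b) (powGap μ) := by
  refine concaveOn_of_hasDerivWithinAt2_nonpos (f' := powGapDeriv μ) (f'' := powGapDeriv2 μ)
    (convex_Icc a b)
    (fun x hx => (hasDerivAt_powGap hμ (ha.trans hx.1)).continuousAt.continuousWithinAt)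
    ?_ ?_ ?_ <;> simp only [interior_Icc] <;> intro x hx
  · exact (hasDerivAt_powGap hμ (ha.trans hx.1.le)).hasDerivWithinAt
  · exact (hasDerivAt_powGapDeriv (ha.trans_lt hx.1)).hasDerivWithinAt
  · have := rpow_nonneg (ha.trans hx.1.le) (μ - 2)
    have hsign := sub_nonpos.2 (h x hx)
    have : 0 ≤ μ * (μ - 1) := by nlinarith
    exact mul_nonpos_of_nonneg_of_nonpos (by positivity) hsign

theorem powGapDeriv_zero_nonneg (hμ : 1 ≤ μ) : 0 ≤ powGapDeriv μ 0 := by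
  rcases hμ.eq_or_lt with rfl | hμ
  · norm_num [powGapDeriv]
  have : powGapDeriv μ 0 = μ / (μ + 1) := by
    rw [powGapDeriv, add_zero, one_rpow, zero_rpow (by linarith)]
    field_simp
    ring
  rw [this]
  positivity

theorem powGapDeriv_one_nonpos (hμ : 1 ≤ μ) : powGapDeriv μ 1 ≤ 0 := by
  have h := sq_add_one_le_mul_two_rpow hμ
  have h2 : (2 : ℝ) ^ μ = 2 * 2 ^ (μ - 1) := by
    rw [← rpow_one_add' zero_le_two (by linarith)]; ring_nf
  have hc : μ ^ 2 / (μ + 1) * (μ + 1) = μ ^ 2 := div_mul_cancel₀ _ (by linarith)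
  simp only [powGapDeriv, one_rpow, one_add_one_eq_two, h2]
  nlinarith

theorem powGap_nonneg (hμ : 1 ≤ μ) {t : ℝ} (ht : t ∈ Icc (0 : ℝ) 1) : 0 ≤ powGap μ t := by
  have hμ0 : 0 < μ := by linarith
  rcases le_total 2 μ with h2μ | hμ2
  · obtain ⟨τ, hτ, hleft, hright⟩ := ((antitoneOn_one_add_inv_rpow (sub_nonneg.2 h2μ)).mono
      Ioo_subset_Ioi_self).exists_crossing zero_le_one (2 ^ μ - μ ^ 2 / (μ + 1) - 1)
    have hconvex : ConvexOn ℝ (Icc 0 τ) (powGap μ) := convexOn_powGap hμ le_rfl hleft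
    have hconcave : ConcaveOn ℝ (Icc τ 1) (powGap μ) := concaveOn_powGap hμ hτ.1 hright
    have hleft_nonneg : ∀ x ∈ Icc 0 τ, 0 ≤ powGap μ x := fun x hx =>
      powGap_zero hμ0 ▸ hconvex.le_of_hasDerivAt_left_nonneg (hasDerivAt_powGap hμ le_rfl)
        (powGapDeriv_zero_nonneg hμ) hx
    rcases le_total t τ with htτ | hτt
    · exact hleft_nonneg t ⟨ht.1, htτ⟩
    · exact hconcave.nonneg_of_endpoints (hleft_nonneg τ ⟨hτ.1, le_rfl⟩) powGap_one.ge ⟨hτt, ht.2⟩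
  · obtain ⟨τ, hτ, hleft, hright⟩ := ((monotoneOn_one_add_inv_rpow (sub_nonpos.2 hμ2)).neg.mono
      Ioo_subset_Ioi_self).exists_crossing zero_le_one (-(2 ^ μ - μ ^ 2 / (μ + 1) - 1))
    have hconcave : ConcaveOn ℝ (Icc 0 τ) (powGap μ) :=
      concaveOn_powGap hμ le_rfl fun x hx => neg_le_neg_iff.1 (hleft x hx)
    have hconvex : ConvexOn ℝ (Icc τ 1) (powGap μ) :=
      convexOn_powGap hμ hτ.1 fun x hx => neg_le_neg_iff.1 (hright x hx)
    have hright_nonneg : ∀ x ∈ Icc τ 1, 0 ≤ powGap μ x := fun x hx =>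
      powGap_one (μ := μ) ▸ hconvex.le_of_hasDerivAt_right_nonpos
        (hasDerivAt_powGap hμ zero_le_one) (powGapDeriv_one_nonpos hμ) hx
    rcases le_total t τ with htτ | hτt
    · exact hconcave.nonneg_of_endpoints (powGap_zero hμ0).ge (hright_nonneg τ ⟨le_rfl, hτ.2⟩)
        ⟨ht.1, htτ⟩
    · exact hright_nonneg t ⟨hτt, ht.2⟩

end powGap

theorem add_rpow_lower_bound {μ a b : ℝ} (hμ : 1 ≤ μ) (hb : 0 ≤ b) (hba : b ≤ a) :
    a ^ μ + μ ^ 2 / (μ + 1) * a ^ (μ - 1) * b + (2 ^ μ - μ ^ 2 / (μ + 1) - 1) * b ^ μ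
      ≤ (a + b) ^ μ := by
  rcases (hb.trans hba).eq_or_lt with rfl | ha
  · obtain rfl : b = 0 := le_antisymm hba hb
    simp [zero_rpow (by linarith : μ ≠ 0)]
  have hgap := mul_nonneg (rpow_nonneg ha.le μ)
    (powGap_nonneg hμ ⟨div_nonneg hb ha.le, (div_le_one ha).2 hba⟩)
  have h1 : a ^ μ * (1 + b / a) ^ μ = (a + b) ^ μ := by
    rw [← mul_rpow ha.le (by positivity), mul_add, mul_div_cancel₀ _ ha.ne', mul_one]
  have h2 : a ^ μ * (b / a) ^ μ = b ^ μ := by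
    rw [← mul_rpow ha.le (by positivity), mul_div_cancel₀ _ ha.ne']
  have h3 : a ^ μ * (b / a) = a ^ (μ - 1) * b := by
    rw [rpow_sub_one ha.ne']
    ring
  have hexpand : a ^ μ * powGap μ (b / a) = a ^ μ * (1 + b / a) ^ μ - a ^ μ
      - μ ^ 2 / (μ + 1) * (a ^ μ * (b / a))
      - (2 ^ μ - μ ^ 2 / (μ + 1) - 1) * (a ^ μ * (b / a) ^ μ) := by
    rw [powGap]
    ring
  rw [hexpand, h1, h2, h3] at hgap
  linarith

theorem mul_rpow_sub_one_mul_sub_le {p a b : ℝ} (hp₀ : 0 ≤ p) (hp₁ : p ≤ 1) (hb : 0 ≤ b)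
    (hba : b ≤ a) : p * a ^ (p - 1) * (a - b) ≤ a ^ p - b ^ p := by
  rcases hba.eq_or_lt with rfl | hba
  · simp
  have hslope := (concaveOn_rpow hp₀ hp₁).le_slope_of_hasDerivAt (mem_Ici.2 hb)
    (mem_Ici.2 (hb.trans hba.le)) hba (hasDerivAt_rpow_const (Or.inl (hb.trans_lt hba).ne'))
  rwa [slope_def_field, le_div_iff₀ (sub_pos.2 hba)] at hslope

theorem trapezoid_rpow_le {r a b : ℝ} (hr₁ : 1 ≤ r) (hr₂ : r ≤ 2) (hb : 0 ≤ b) (hba : b ≤ a) :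
    r * (a ^ (r - 1) + b ^ (r - 1)) * (a - b) ≤ 2 * (a ^ r - b ^ r) := by
  let φ : ℝ → ℝ := fun s => 2 * (s ^ r - b ^ r) - r * (s ^ (r - 1) + b ^ (r - 1)) * (s - b)
  have hφ : ∀ s, 0 < s → HasDerivAt φ
      (r * (s ^ (r - 1) - b ^ (r - 1) - (r - 1) * s ^ (r - 1 - 1) * (s - b))) s := by
    intro s hs
    have h1 : HasDerivAt (fun s : ℝ => s ^ r) (r * s ^ (r - 1)) s :=
      hasDerivAt_rpow_const (Or.inl hs.ne')
    have h2 : HasDerivAt (fun s : ℝ => s ^ (r - 1)) ((r - 1) * s ^ (r - 1 - 1)) s :=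
      hasDerivAt_rpow_const (Or.inl hs.ne')
    refine (((h1.sub_const _).const_mul 2).sub
      ((((h2.add_const _).const_mul r).mul ((hasDerivAt_id s).sub_const b)))).congr_deriv ?_
    simp only [id]
    ring
  have hmono : MonotoneOn φ (Icc b a) := by
    have hcont : Continuous φ := by
      have := continuous_rpow_const (by linarith : (0 : ℝ) ≤ r)
      have := continuous_rpow_const (by linarith : (0 : ℝ) ≤ r - 1)
      fun_prop
    refine monotoneOn_of_deriv_nonneg (convex_Icc b a) hcont.continuousOn ?_ ?_ <;>
      simp only [interior_Icc] <;> intro s hs <;> have hs₀ := hb.trans_lt hs.1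
    · exact (hφ s hs₀).differentiableAt.differentiableWithinAt
    · have := mul_rpow_sub_one_mul_sub_le (p := r - 1) (by linarith) (by linarith) hb hs.1.le
      rw [(hφ s hs₀).deriv]
      exact mul_nonneg (by linarith) (by linarith)
  have := hmono (left_mem_Icc.2 hba) (right_mem_Icc.2 hba) hba
  simp only [φ, sub_self, mul_zero] at this
  linarith

noncomputable def rpowDivDiff (r u : ℝ) : ℝ := (((1 + u) / 2) ^ r - ((1 - u) / 2) ^ r) / u

theorem antitoneOn_rpowDivDiff {r : ℝ} (hr₁ : 1 ≤ r) (hr₂ : r ≤ 2) :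
    AntitoneOn (rpowDivDiff r) (Ioo 0 1) := by
  have hd : ∀ u ∈ Ioo (0 : ℝ) 1, HasDerivAt (rpowDivDiff r)
      ((r / 2 * (((1 + u) / 2) ^ (r - 1) + ((1 - u) / 2) ^ (r - 1)) * u
        - (((1 + u) / 2) ^ r - ((1 - u) / 2) ^ r)) / u ^ 2) u := by
    rintro u ⟨hu₀, hu₁⟩
    have hA := (((hasDerivAt_id' u).const_add 1).div_const 2).rpow_const (p := r)
      (Or.inl (by linarith))
    have hB := (((hasDerivAt_id' u).const_sub 1).div_const 2).rpow_const (p := r)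
      (Or.inl (by linarith))
    exact ((hA.sub hB).div (hasDerivAt_id' u) hu₀.ne').congr_deriv
      (by simp only [Pi.sub_apply]; ring)
  refine antitoneOn_of_deriv_nonpos (convex_Ioo 0 1)
    (fun u hu => (hd u hu).continuousAt.continuousWithinAt) ?_ ?_ <;>
    simp only [interior_Ioo] <;> intro u hu
  · exact (hd u hu).differentiableAt.differentiableWithinAt
  · rw [(hd u hu).deriv]
    have h := trapezoid_rpow_le hr₁ hr₂ (by linarith [hu.2] : 0 ≤ (1 - u) / 2)
      (by linarith [hu.1] : (1 - u) / 2 ≤ (1 + u) / 2)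
    rw [show (1 + u) / 2 - (1 - u) / 2 = u by ring] at h
    exact div_nonpos_of_nonpos_of_nonneg (by linarith) (sq_nonneg u)

noncomputable def tsallisG (q t : ℝ) : ℝ :=
  1 / (q - 1) * (1 - ((1 + √(1 - t)) / 2) ^ q - ((1 - √(1 - t)) / 2) ^ q)

section tsallisG

variable {q : ℝ}

theorem tsallisG_zero (hq : 0 < q) : tsallisG q 0 = 0 := by
  simp [tsallisG, zero_rpow hq.ne']

theorem tsallisG_nonneg (hq : 1 < q) {t : ℝ} (ht : 0 ≤ t) : 0 ≤ tsallisG q t := by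
  have hs₀ := sqrt_nonneg (1 - t)
  have hs₁ : √(1 - t) ≤ 1 := sqrt_le_one.2 (by linarith)
  have hA := rpow_le_self_of_le_one (by linarith) (by linarith) hq.le (x := (1 + √(1 - t)) / 2)
  have hB := rpow_le_self_of_le_one (by linarith) (by linarith) hq.le (x := (1 - √(1 - t)) / 2)
  exact mul_nonneg (by have := sub_pos.2 hq; positivity) (by linarith)

theorem hasDerivAt_tsallisG (hq : 1 < q) {t : ℝ} (ht : t ∈ Ioo (0 : ℝ) 1) :
    HasDerivAt (tsallisG q) (q / (4 * (q - 1)) * rpowDivDiff (q - 1) √(1 - t)) t := by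
  have hu₀ : 0 < √(1 - t) := sqrt_pos.2 (by linarith [ht.2])
  have hu₁ : √(1 - t) < 1 := (sqrt_lt' one_pos).2 (by linarith [ht.1])
  have hu : HasDerivAt (fun t : ℝ => √(1 - t)) (1 / (2 * √(1 - t)) * (-1)) t :=
    (hasDerivAt_sqrt (by linarith [ht.2])).comp t ((hasDerivAt_id t).const_sub 1)
  have hA := ((hu.const_add 1).div_const 2).rpow_const (p := q) (Or.inl (by linarith))
  have hB := ((hu.const_sub 1).div_const 2).rpow_const (p := q) (Or.inl (by linarith))
  refine (((hA.const_sub 1).sub hB).const_mul (1 / (q - 1))).congr_deriv ?_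
  have : q - 1 ≠ 0 := by linarith
  rw [rpowDivDiff]
  field_simp
  ring

theorem continuous_tsallisG (hq : 0 ≤ q) : Continuous (tsallisG q) := by
  have := continuous_rpow_const hq
  unfold tsallisG
  fun_prop

theorem convexOn_tsallisG (hq₂ : 2 ≤ q) (hq₃ : q ≤ 3) : ConvexOn ℝ (Icc 0 1) (tsallisG q) := by
  have hq : 1 < q := by linarith
  refine MonotoneOn.convexOn_of_deriv (convex_Icc 0 1)
    (continuous_tsallisG (by linarith)).continuousOn ?_ ?_ <;> simp only [interior_Icc]
  · exact fun t ht => (hasDerivAt_tsallisG hq ht).differentiableAt.differentiableWithinAt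
  · intro s hs t ht hst
    rw [(hasDerivAt_tsallisG hq hs).deriv, (hasDerivAt_tsallisG hq ht).deriv]
    have hmem : ∀ t ∈ Ioo (0 : ℝ) 1, √(1 - t) ∈ Ioo (0 : ℝ) 1 := fun t ht =>
      ⟨sqrt_pos.2 (by linarith [ht.2]), (sqrt_lt' one_pos).2 (by linarith [ht.1])⟩
    exact mul_le_mul_of_nonneg_left (antitoneOn_rpowDivDiff (by linarith) (by linarith)
      (hmem t ht) (hmem s hs) (sqrt_le_sqrt (by linarith))) (div_nonneg (by linarith) (by linarith))

theorem tsallisG_add_le (hq₂ : 2 ≤ q) (hq₃ : q ≤ 3) {s t : ℝ} (hs : 0 ≤ s) (ht : 0 ≤ t)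
    (hst : s + t ≤ 1) : tsallisG q s + tsallisG q t ≤ tsallisG q (s + t) :=
  (convexOn_tsallisG hq₂ hq₃).add_le_of_map_zero (tsallisG_zero (by linarith)) hs ht hst

theorem tsallisG_le_of_le (hq₂ : 2 ≤ q) (hq₃ : q ≤ 3) {s t : ℝ} (hs : 0 ≤ s) (hst : s ≤ t)
    (ht : t ≤ 1) : tsallisG q s ≤ tsallisG q t := by
  have := tsallisG_add_le hq₂ hq₃ hs (sub_nonneg.2 hst) (by linarith)
  rw [add_sub_cancel] at this
  linarith [tsallisG_nonneg (by linarith : 1 < q) (sub_nonneg.2 hst) (t := t - s)]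

end tsallisG

theorem stmt_9_general (q μ : ℝ) (hq2 : 2 ≤ q) (hq3 : q ≤ 3) (hμ : 1 ≤ μ)
    (x y : ℝ) (hy : y ∈ Set.Icc (0 : ℝ) 1)
    (hxy : y ≤ x) (hsum : x ^ 2 + y ^ 2 ≤ 1)
    (g : ℝ → ℝ)
    (hg : ∀ t, g t = (1 / (q - 1)) * (1 - ((1 + Real.sqrt (1 - t)) / 2) ^ q
      - ((1 - Real.sqrt (1 - t)) / 2) ^ q)) :
    g (x ^ 2 + y ^ 2) ^ μ ≥
      g (x ^ 2) ^ μ + (μ ^ 2 / (μ + 1)) * g (x ^ 2) ^ (μ - 1) * g (y ^ 2)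
        + (2 ^ μ - μ ^ 2 / (μ + 1) - 1) * g (y ^ 2) ^ μ := by
  obtain rfl : g = tsallisG q := funext hg
  have hy2 : 0 ≤ y ^ 2 := sq_nonneg y
  have hyx : y ^ 2 ≤ x ^ 2 := pow_le_pow_left₀ hy.1 hxy 2
  have hb : 0 ≤ tsallisG q (y ^ 2) := tsallisG_nonneg (by linarith) hy2
  have hba : tsallisG q (y ^ 2) ≤ tsallisG q (x ^ 2) :=
    tsallisG_le_of_le hq2 hq3 hy2 hyx (by linarith)
  calc _ ≤ (tsallisG q (x ^ 2) + tsallisG q (y ^ 2)) ^ μ := add_rpow_lower_bound hμ hb hba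
    _ ≤ tsallisG q (x ^ 2 + y ^ 2) ^ μ :=
        rpow_le_rpow (by linarith) (tsallisG_add_le hq2 hq3 (sq_nonneg x) hy2 hsum) (by linarith)

theorem stmt_9 (q μ : ℝ) (hq2 : 2 ≤ q) (hq3 : q ≤ 3) (hμ : 1 ≤ μ)
    (x y : ℝ) (hx : x ∈ Set.Icc (0 : ℝ) 1) (hy : y ∈ Set.Icc (0 : ℝ) 1)
    (hxy : y ≤ x) (hsum : x ^ 2 + y ^ 2 ≤ 1)
    (g : ℝ → ℝ)
    (hg : ∀ t, g t = (1 / (q - 1)) * (1 - ((1 + Real.sqrt (1 - t)) / 2) ^ q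
      - ((1 - Real.sqrt (1 - t)) / 2) ^ q)) :
    g (x ^ 2 + y ^ 2) ^ μ ≥
      g (x ^ 2) ^ μ + (μ ^ 2 / (μ + 1)) * g (x ^ 2) ^ (μ - 1) * g (y ^ 2)
        + (2 ^ μ - μ ^ 2 / (μ + 1) - 1) * g (y ^ 2) ^ μ :=
  stmt_9_general q μ hq2 hq3 hμ x y hy hxy hsum g hg
end

section
/- Let f_α(x) = (1/(1−α))·log₂[((1−√(1−x²))/2)^α + ((1+√(1−x²))/2)^α] for 0 ≤ x ≤ 1 and α > 0, α ≠ 1. For α ≥ 2, f_α is monotonically nondecreasing on [0,1]. -/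
/-! The reduced state of a two-qubit pure state of concurrence `x` has eigenvalues `(1 ± u) / 2`
with `u = √(1 - x²)`, so `f_α(x) = (1 - α)⁻¹ log₂ S_α(u)` for the power sum `S_α` of these
eigenvalues. For `α ≥ 1` the derivative of `S_α` is `α/2` times a difference of `(α - 1)`-th powers
of the larger and the smaller eigenvalue, so `S_α` is nondecreasing on `[0, 1]`. As `u` decreases
in `x` and `1 / (1 - α) < 0`, the two reversals of order cancel. -/

open Real Set

noncomputable def schmidtPowerSum (p u : ℝ) : ℝ := ((1 - u) / 2) ^ p + ((1 + u) / 2) ^ p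

lemma hasDerivAt_schmidtPowerSum {p : ℝ} (hp : 1 ≤ p) (u : ℝ) :
    HasDerivAt (schmidtPowerSum p)
      (p / 2 * (((1 + u) / 2) ^ (p - 1) - ((1 - u) / 2) ^ (p - 1))) u := by
  have hminus : HasDerivAt (fun u : ℝ => (1 - u) / 2) (-1 / 2) u := by
    simpa using ((hasDerivAt_const u (1 : ℝ)).sub (hasDerivAt_id u)).div_const 2
  have hplus : HasDerivAt (fun u : ℝ => (1 + u) / 2) (1 / 2) u := by
    simpa using ((hasDerivAt_const u (1 : ℝ)).add (hasDerivAt_id u)).div_const 2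
  exact ((hminus.rpow_const (Or.inr hp)).fun_add (hplus.rpow_const (Or.inr hp))).congr_deriv
    (by ring)

lemma monotoneOn_schmidtPowerSum {p : ℝ} (hp : 1 ≤ p) :
    MonotoneOn (schmidtPowerSum p) (Icc 0 1) := by
  refine monotoneOn_of_hasDerivWithinAt_nonneg (convex_Icc 0 1)
    (fun u _ => (hasDerivAt_schmidtPowerSum hp u).continuousAt.continuousWithinAt)
    (fun u _ => (hasDerivAt_schmidtPowerSum hp u).hasDerivWithinAt) fun u hu => ?_
  rw [interior_Icc] at hu
  have hle : ((1 - u) / 2) ^ (p - 1) ≤ ((1 + u) / 2) ^ (p - 1) :=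
    rpow_le_rpow (by linarith [hu.2]) (by linarith [hu.1]) (by linarith)
  exact mul_nonneg (by linarith) (sub_nonneg.mpr hle)

lemma schmidtPowerSum_pos (p : ℝ) {u : ℝ} (hu : u ∈ Icc (0 : ℝ) 1) : 0 < schmidtPowerSum p u :=
  add_pos_of_nonneg_of_pos (rpow_nonneg (by linarith [hu.2]) p)
    (rpow_pos_of_pos (by linarith [hu.1]) p)

lemma mapsTo_sqrt_one_sub_sq : MapsTo (fun x : ℝ => √(1 - x ^ 2)) (Icc 0 1) (Icc 0 1) :=
  fun x hx => ⟨sqrt_nonneg _, sqrt_le_one.mpr (by nlinarith [hx.1, hx.2])⟩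

lemma antitoneOn_sqrt_one_sub_sq : AntitoneOn (fun x : ℝ => √(1 - x ^ 2)) (Icc 0 1) :=
  fun x hx y _ hxy => sqrt_le_sqrt (by nlinarith [hx.1])

theorem stmt_10 (α : ℝ) (hα : 2 ≤ α) :
    MonotoneOn (fun x : ℝ =>
      (1 / (1 - α)) * Real.logb 2
        (((1 - Real.sqrt (1 - x ^ 2)) / 2) ^ α + ((1 + Real.sqrt (1 - x ^ 2)) / 2) ^ α))
      (Set.Icc (0 : ℝ) 1) := by
  have hlog : MonotoneOn (fun u => logb 2 (schmidtPowerSum α u)) (Icc 0 1) :=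
    fun u hu v hv huv => logb_le_logb_of_le one_lt_two (schmidtPowerSum_pos α hu)
      (monotoneOn_schmidtPowerSum (by linarith) hu hv huv)
  have hcoeff : 1 / (1 - α) ≤ 0 := div_nonpos_of_nonneg_of_nonpos zero_le_one (by linarith)
  exact (antitone_mul_left hcoeff).comp_antitoneOn
    (hlog.comp_AntitoneOn antitoneOn_sqrt_one_sub_sq mapsTo_sqrt_one_sub_sq)
end

section
/- Let f_α(x) = (1/(1−α))·log₂[((1−√(1−x²))/2)^α + ((1+√(1−x²))/2)^α]. For α ≥ 2 and x, y ≥ 0 with x² + y² ≤ 1, f_α(√(x²+y²)) ≥ f_α(x) + f_α(y). -/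
/-!
With `t = x²` and `r = √(1 - t)`, `f x` is `log G(r) / ((1 - α) log 2)` where
`G(r) = ((1 - r)/2)^α + ((1 + r)/2)^α`. As `1 - α < 0`, the claim is subadditivity of
`H(t) = log G(√(1 - t))` on `[0, 1]`, which follows from `H 0 = 0` and concavity of `H`.
Since `H'(t) = -G'(r) / (2 r G(r))` and `r` decreases in `t`, concavity amounts to `G' / (r G)`
being antitone on `(0, 1)`, an inequality between powers of `p = (1 - r)/2 < q = (1 + r)/2`.
Writing `p, q = e^(m ∓ θ)` it becomes the nonnegativity of
`6 sinh(βθ) - 2 sinh((β - 2)θ) - (β - 1) sinh 3θ - (β + 7) sinh θ` for `β = 2α - 1 ≥ 3`,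
which vanishes at `θ = 0` and has derivative `6β cosh(βθ)` minus cosh terms of total weight `6β`
and smaller frequencies.
-/

open Real Set

lemma ConcaveOn.mul_le_map_mul {s : Set ℝ} {f : ℝ → ℝ} (hf : ConcaveOn ℝ s f) (h₀ : 0 ∈ s)
    (hf₀ : 0 ≤ f 0) {c x : ℝ} (hx : x ∈ s) (hc₀ : 0 ≤ c) (hc₁ : c ≤ 1) :
    c * f x ≤ f (c * x) := by
  have h := hf.2 hx h₀ hc₀ (sub_nonneg.2 hc₁) (add_sub_cancel c 1)
  simp only [smul_eq_mul, mul_zero, add_zero] at h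
  linarith [mul_nonneg (sub_nonneg.2 hc₁) hf₀]

lemma ConcaveOn.map_add_le {s : Set ℝ} {f : ℝ → ℝ} (hf : ConcaveOn ℝ s f) (h₀ : 0 ∈ s)
    (hf₀ : 0 ≤ f 0) {a b : ℝ} (ha : 0 ≤ a) (hb : 0 ≤ b) (hab : a + b ∈ s) :
    f (a + b) ≤ f a + f b := by
  rcases (add_nonneg ha hb).eq_or_lt with hzero | hpos
  · obtain ⟨rfl, rfl⟩ : a = 0 ∧ b = 0 := ⟨by linarith, by linarith⟩
    simpa using hf₀
  have h₁ := hf.mul_le_map_mul h₀ hf₀ hab (div_nonneg ha hpos.le)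
    (div_le_one_of_le₀ (by linarith) hpos.le)
  have h₂ := hf.mul_le_map_mul h₀ hf₀ hab (div_nonneg hb hpos.le)
    (div_le_one_of_le₀ (by linarith) hpos.le)
  rw [div_mul_cancel₀ _ hpos.ne'] at h₁ h₂
  calc f (a + b) = a / (a + b) * f (a + b) + b / (a + b) * f (a + b) := by
        field_simp
    _ ≤ f a + f b := add_le_add h₁ h₂

lemma cosh_mul_le_cosh_mul {c β : ℝ} (hc : |c| ≤ β) (θ : ℝ) : cosh (c * θ) ≤ cosh (β * θ) := by
  rw [cosh_le_cosh, abs_mul, abs_mul]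
  exact mul_le_mul_of_nonneg_right (hc.trans (le_abs_self β)) (abs_nonneg θ)

lemma hasDerivAt_sinh_mul (c θ : ℝ) :
    HasDerivAt (fun θ => sinh (c * θ)) (c * cosh (c * θ)) θ := by
  simpa [mul_comm] using ((hasDerivAt_id θ).const_mul c).sinh

noncomputable def sinhCombination (β θ : ℝ) : ℝ :=
  6 * sinh (β * θ) - 2 * sinh ((β - 2) * θ) - (β - 1) * sinh (3 * θ) - (β + 7) * sinh θ

lemma sinhCombination_nonneg {β θ : ℝ} (hβ : 3 ≤ β) (hθ : 0 ≤ θ) : 0 ≤ sinhCombination β θ := by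
  have hderiv (s : ℝ) : HasDerivAt (sinhCombination β)
      (6 * (β * cosh (β * s)) - 2 * ((β - 2) * cosh ((β - 2) * s))
        - (β - 1) * (3 * cosh (3 * s)) - (β + 7) * cosh s) s :=
    ((((hasDerivAt_sinh_mul β s).const_mul 6).sub ((hasDerivAt_sinh_mul _ s).const_mul 2)).sub
      ((hasDerivAt_sinh_mul 3 s).const_mul _)).sub ((hasDerivAt_sinh s).const_mul _)
  have hderiv_nonneg (s : ℝ) : 0 ≤ 6 * (β * cosh (β * s)) - 2 * ((β - 2) * cosh ((β - 2) * s))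
      - (β - 1) * (3 * cosh (3 * s)) - (β + 7) * cosh s := by
    have h₁ : cosh ((β - 2) * s) ≤ cosh (β * s) :=
      cosh_mul_le_cosh_mul (abs_le.2 ⟨by linarith, by linarith⟩) s
    have h₂ : cosh (3 * s) ≤ cosh (β * s) :=
      cosh_mul_le_cosh_mul (abs_le.2 ⟨by linarith, by linarith⟩) s
    have h₃ : cosh s ≤ cosh (β * s) := by
      simpa using cosh_mul_le_cosh_mul (c := 1) (abs_le.2 ⟨by linarith, by linarith⟩) s
    nlinarith
  simpa [sinhCombination] using monotone_of_hasDerivAt_nonneg hderiv hderiv_nonneg hθ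

lemma hyperbolic_gap_eq_sinhCombination (α θ : ℝ) :
    α * sinh ((α - 1) * θ) ^ 2 * sinh θ + sinh ((α - 1) * θ) * cosh (α * θ)
      - (α - 1) * cosh ((α - 2) * θ) * sinh θ * cosh (α * θ)
    = sinhCombination (2 * α - 1) θ / 8 := by
  set A := (α - 1) * θ
  rw [sinhCombination, show α * θ = A + θ by ring, show (α - 2) * θ = A - θ by ring,
    show (2 * α - 1) * θ = 2 * A + θ by ring, show (2 * α - 1 - 2) * θ = 2 * A - θ by ring,
    show 3 * θ = 2 * θ + θ by ring]
  simp only [sinh_add, sinh_sub, cosh_add, cosh_sub, sinh_two_mul, cosh_two_mul]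
  linear_combination ((1 - α) * sinh θ * cosh θ ^ 2 - sinh θ) * cosh_sq A
    + (1 - α) * sinh θ * (sinh A ^ 2 + 1 / 4) * cosh_sq θ

lemma cosh_mul_sinh_mul_cosh_le {α θ : ℝ} (hα : 2 ≤ α) (hθ : 0 ≤ θ) :
    (α - 1) * cosh ((α - 2) * θ) * sinh θ * cosh (α * θ)
      ≤ α * sinh ((α - 1) * θ) ^ 2 * sinh θ + sinh ((α - 1) * θ) * cosh (α * θ) := by
  have := sinhCombination_nonneg (β := 2 * α - 1) (by linarith) hθ
  linarith [hyperbolic_gap_eq_sinhCombination α θ]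

/-- For `p, q = (1 ∓ r)/2` this is `r G'' G ≤ G' G + r G'²` with `G = powSum α`. -/
lemma rpow_add_rpow_mul_sub_le {α p q : ℝ} (hα : 2 ≤ α) (hp : 0 < p) (hpq : p ≤ q) :
    (α - 1) * (p ^ (α - 2) + q ^ (α - 2)) * (q - p) * (p ^ α + q ^ α)
      ≤ α * (q ^ (α - 1) - p ^ (α - 1)) ^ 2 * (q - p)
        + 2 * (q ^ (α - 1) - p ^ (α - 1)) * (p ^ α + q ^ α) := by
  have hq : 0 < q := hp.trans_le hpq
  obtain ⟨m, θ, hlogp, hlogq, hθ⟩ : ∃ m θ : ℝ, log p = m - θ ∧ log q = m + θ ∧ 0 ≤ θ :=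
    ⟨(log p + log q) / 2, (log q - log p) / 2, by ring, by ring,
      by linarith [log_le_log hp hpq]⟩
  have hsub (γ : ℝ) : q ^ γ - p ^ γ = 2 * exp (γ * m) * sinh (γ * θ) := by
    rw [rpow_def_of_pos hp, rpow_def_of_pos hq, hlogp, hlogq, sinh_eq,
      show (m + θ) * γ = γ * m + γ * θ by ring, show (m - θ) * γ = γ * m + -(γ * θ) by ring,
      exp_add, exp_add]
    ring
  have hadd (γ : ℝ) : p ^ γ + q ^ γ = 2 * exp (γ * m) * cosh (γ * θ) := by
    rw [rpow_def_of_pos hp, rpow_def_of_pos hq, hlogp, hlogq, cosh_eq,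
      show (m + θ) * γ = γ * m + γ * θ by ring, show (m - θ) * γ = γ * m + -(γ * θ) by ring,
      exp_add, exp_add]
    ring
  have hdiff : q - p = 2 * exp m * sinh θ := by simpa using hsub 1
  have hexp₁ : exp ((α - 1) * m) = exp ((α - 2) * m) * exp m := by
    rw [← exp_add]; ring_nf
  have hexp₂ : exp (α * m) = exp ((α - 2) * m) * exp m ^ 2 := by
    rw [sq, ← mul_assoc, ← exp_add, ← exp_add]; ring_nf
  rw [hsub, hadd, hadd, hdiff, hexp₁, hexp₂]
  have hpos : 0 ≤ 8 * exp ((α - 2) * m) ^ 2 * exp m ^ 3 := by positivity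
  nlinarith [mul_le_mul_of_nonneg_left (cosh_mul_sinh_mul_cosh_le hα hθ) hpos]

noncomputable def powSum (α r : ℝ) : ℝ := ((1 - r) / 2) ^ α + ((1 + r) / 2) ^ α

noncomputable def powSumDeriv (α r : ℝ) : ℝ :=
  α / 2 * (((1 + r) / 2) ^ (α - 1) - ((1 - r) / 2) ^ (α - 1))

section
variable {α r : ℝ}

lemma powSum_pos (hr₀ : -1 < r) (hr₁ : r ≤ 1) : 0 < powSum α r :=
  add_pos_of_nonneg_of_pos (rpow_nonneg (by linarith) α) (rpow_pos_of_pos (by linarith) α)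

lemma powSum_one (hα : α ≠ 0) : powSum α 1 = 1 := by
  simp [powSum, zero_rpow hα]

lemma continuous_powSum (hα : 0 ≤ α) : Continuous (powSum α) := by
  unfold powSum
  exact ((continuous_const.sub continuous_id).div_const 2).rpow_const (fun _ => Or.inr hα) |>.add
    (((continuous_const.add continuous_id).div_const 2).rpow_const (fun _ => Or.inr hα))

lemma hasDerivAt_one_sub_half_rpow (γ : ℝ) (hr : r < 1) :
    HasDerivAt (fun r => ((1 - r) / 2) ^ γ) (-(γ / 2) * ((1 - r) / 2) ^ (γ - 1)) r :=
  ((((hasDerivAt_id' r).const_sub 1).div_const 2).rpow_const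
    (Or.inl (by linarith))).congr_deriv (by ring)

lemma hasDerivAt_one_add_half_rpow (γ : ℝ) (hr : -1 < r) :
    HasDerivAt (fun r => ((1 + r) / 2) ^ γ) (γ / 2 * ((1 + r) / 2) ^ (γ - 1)) r :=
  ((((hasDerivAt_id' r).const_add 1).div_const 2).rpow_const
    (Or.inl (by linarith))).congr_deriv (by ring)

lemma hasDerivAt_powSum (hr : r ∈ Ioo (-1) 1) :
    HasDerivAt (powSum α) (powSumDeriv α r) r :=
  ((hasDerivAt_one_sub_half_rpow α hr.2).add (hasDerivAt_one_add_half_rpow α hr.1)).congr_deriv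
    (by unfold powSumDeriv; ring)

lemma hasDerivAt_powSumDeriv (hr : r ∈ Ioo (-1) 1) :
    HasDerivAt (powSumDeriv α)
      (α * (α - 1) / 4 * (((1 - r) / 2) ^ (α - 2) + ((1 + r) / 2) ^ (α - 2))) r :=
  (((hasDerivAt_one_add_half_rpow (α - 1) hr.1).sub
    (hasDerivAt_one_sub_half_rpow (α - 1) hr.2)).const_mul (α / 2)).congr_deriv
    (by rw [show α - 1 - 1 = α - 2 by ring]; ring)

lemma antitoneOn_powSumDeriv_div (hα : 2 ≤ α) :
    AntitoneOn (fun r => powSumDeriv α r / (r * powSum α r)) (Ioo 0 1) := by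
  have hne {r : ℝ} (hr : r ∈ Ioo (0 : ℝ) 1) : r * powSum α r ≠ 0 :=
    (mul_pos hr.1 (powSum_pos (by linarith [hr.1]) hr.2.le)).ne'
  have hmem {r : ℝ} (hr : r ∈ Ioo (0 : ℝ) 1) : r ∈ Ioo (-1 : ℝ) 1 := ⟨by linarith [hr.1], hr.2⟩
  have hderiv {r : ℝ} (hr : r ∈ Ioo (0 : ℝ) 1) :=
    (hasDerivAt_powSumDeriv (α := α) (hmem hr)).fun_div
      ((hasDerivAt_id' r).fun_mul (hasDerivAt_powSum (hmem hr))) (hne hr)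
  refine antitoneOn_of_deriv_nonpos (convex_Ioo 0 1)
    (fun r hr => (hderiv hr).continuousAt.continuousWithinAt) (fun r hr => ?_) (fun r hr => ?_)
  · rw [interior_Ioo] at hr
    exact (hderiv hr).differentiableAt.differentiableWithinAt
  rw [interior_Ioo] at hr
  rw [(hderiv hr).deriv]
  refine div_nonpos_of_nonpos_of_nonneg ?_ (sq_nonneg _)
  have hcore := rpow_add_rpow_mul_sub_le hα (p := (1 - r) / 2) (q := (1 + r) / 2) (by linarith [hr.2])
    (by linarith [hr.1])
  rw [show (1 + r) / 2 - (1 - r) / 2 = r by ring] at hcore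
  unfold powSum powSumDeriv
  nlinarith [mul_le_mul_of_nonneg_left hcore (by linarith : 0 ≤ α / 4)]

noncomputable def logPowSum (α t : ℝ) : ℝ := log (powSum α √(1 - t))

lemma logPowSum_zero (hα : α ≠ 0) : logPowSum α 0 = 0 := by
  simp [logPowSum, powSum_one hα]

lemma hasDerivAt_logPowSum {t : ℝ} (ht : t ∈ Ioo 0 1) :
    HasDerivAt (logPowSum α)
      (-(powSumDeriv α √(1 - t) / (√(1 - t) * powSum α √(1 - t))) / 2) t := by
  have hr₀ : 0 < √(1 - t) := sqrt_pos.2 (by linarith [ht.2])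
  have hr₁ : √(1 - t) < 1 := by
    rw [sqrt_lt' one_pos]; linarith [ht.1]
  have hsqrt := ((hasDerivAt_id' t).const_sub 1).sqrt (by linarith [ht.2])
  have hpos := powSum_pos (α := α) (by linarith) hr₁.le
  have hcomp := (hasDerivAt_powSum (α := α) ⟨by linarith, hr₁⟩).comp t hsqrt
  refine (hcomp.log hpos.ne').congr_deriv ?_
  simp only [Function.comp_apply]
  field_simp

lemma concaveOn_logPowSum (hα : 2 ≤ α) : ConcaveOn ℝ (Icc 0 1) (logPowSum α) := by
  have hderiv {t : ℝ} (ht : t ∈ interior (Icc (0 : ℝ) 1)) :=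
    hasDerivAt_logPowSum (α := α) (by rwa [interior_Icc] at ht)
  refine AntitoneOn.concaveOn_of_deriv (convex_Icc 0 1) ?_
    (fun t ht => (hderiv ht).differentiableAt.differentiableWithinAt) ?_
  · refine ContinuousOn.log ?_ fun t ht => (powSum_pos ?_ ?_).ne'
    · exact (continuous_powSum (by linarith)).comp_continuousOn (by fun_prop)
    · linarith [sqrt_nonneg (1 - t)]
    · exact sqrt_le_one.2 (by linarith [ht.1])
  intro s hs t ht hst
  rw [(hderiv hs).deriv, (hderiv ht).deriv]
  rw [interior_Icc] at hs ht
  have hmem {u : ℝ} (hu : u ∈ Ioo (0 : ℝ) 1) : √(1 - u) ∈ Ioo (0 : ℝ) 1 :=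
    ⟨sqrt_pos.2 (by linarith [hu.2]), by rw [sqrt_lt' one_pos]; linarith [hu.1]⟩
  have := antitoneOn_powSumDeriv_div hα (hmem ht) (hmem hs) (sqrt_le_sqrt (by linarith))
  simp only at this
  linarith

end

theorem stmt_11_general (α : ℝ) (hα : 2 ≤ α) (x y : ℝ)
    (hxy : x ^ 2 + y ^ 2 ≤ 1)
    (f : ℝ → ℝ)
    (hf : ∀ t, f t = (1 / (1 - α)) * Real.logb 2
      (((1 - Real.sqrt (1 - t ^ 2)) / 2) ^ α + ((1 + Real.sqrt (1 - t ^ 2)) / 2) ^ α)) :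
    f (Real.sqrt (x ^ 2 + y ^ 2)) ≥ f x + f y := by
  have hlog : ∀ t, f t = logPowSum α (t ^ 2) / ((1 - α) * log 2) := fun t => by
    rw [hf, logPowSum, powSum, logb, mul_comm (1 - α), ← div_div]; ring
  have hsub : logPowSum α (x ^ 2 + y ^ 2) ≤ logPowSum α (x ^ 2) + logPowSum α (y ^ 2) :=
    (concaveOn_logPowSum hα).map_add_le ⟨le_rfl, zero_le_one⟩
      (logPowSum_zero (by linarith)).ge (sq_nonneg x) (sq_nonneg y) ⟨by positivity, hxy⟩
  have hneg : (1 - α) * log 2 < 0 := mul_neg_of_neg_of_pos (by linarith) (log_pos one_lt_two)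
  rw [hlog, hlog, hlog, sq_sqrt (by positivity), ge_iff_le, ← add_div]
  exact div_le_div_of_nonpos_of_le hneg.le hsub

theorem stmt_11 (α : ℝ) (hα : 2 ≤ α) (x y : ℝ) (hx : 0 ≤ x) (hy : 0 ≤ y)
    (hxy : x ^ 2 + y ^ 2 ≤ 1)
    (f : ℝ → ℝ)
    (hf : ∀ t, f t = (1 / (1 - α)) * Real.logb 2
      (((1 - Real.sqrt (1 - t ^ 2)) / 2) ^ α + ((1 + Real.sqrt (1 - t ^ 2)) / 2) ^ α)) :
    f (Real.sqrt (x ^ 2 + y ^ 2)) ≥ f x + f y :=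
  stmt_11_general α hα x y hxy f hf
end

section
/- Suppose f: [0,1] → ℝ is nonnegative and satisfies f(√(x²+y²))² ≥ f(x)² + f(y)² for all x, y ≥ 0 with x²+y² ≤ 1. Then for every μ ≥ 1, setting γ = 2μ, and for x ≥ y ≥ 0 with x²+y² ≤ 1 and f(x) > 0: f(√(x²+y²))^γ ≥ f(x)^γ + (μ²/(μ+1))·f(x)^(γ−2)·f(y)² + (2^μ − μ²/(μ+1) − 1)·f(y)^γ. -/
/-!
Squared superadditivity makes `f` monotone (write `x` as the hypotenuse of `y` and
`√(x² - y²)`), and gives `f(√(x² + y²))^γ ≥ (f(x)² + f(y)²)^μ = f(x)^γ (1 + t)^μ` with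
`t = f(y)² / f(x)² ∈ [0, 1]`. The refined binomial inequality for `(1 + t)^μ` holds because
`((1 + t)^μ - 1 - c t) / t^μ`, with `c = μ² / (μ + 1)`, is decreasing on `(0, 1]` and equals
`2^μ - 1 - c` at `t = 1`; the sign of its derivative is that of
`μ (1 + t)^(μ-1) - μ - c (μ - 1) t`, which is nonnegative by a Bernoulli-type bound.
-/

open Real Set

lemma mul_div_le_two_rpow_sub_one {q : ℝ} (hq : 0 ≤ q) : q * (q + 1) / (q + 2) ≤ 2 ^ q - 1 := by
  rw [div_le_iff₀ (by linarith)]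
  rcases le_or_gt 1 q with hq1 | hq1
  · have h2q := one_add_mul_self_le_rpow_one_add (by norm_num : (-1 : ℝ) ≤ 1) hq1
    norm_num at h2q
    nlinarith
  · have h2q : 1 + q * log 2 ≤ (2 : ℝ) ^ q := by
      rw [rpow_def_of_pos two_pos]
      linarith [add_one_le_exp (log 2 * q)]
    have hlog : q + 1 ≤ log 2 * (q + 2) := by nlinarith [log_two_gt_d9]
    nlinarith [mul_le_mul_of_nonneg_left hlog hq]

lemma one_add_mul_le_rpow_one_add {q s : ℝ} (hq : 0 ≤ q) (hs0 : 0 ≤ s) (hs1 : s ≤ 1) :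
    1 + q * (q + 1) / (q + 2) * s ≤ (1 + s) ^ q := by
  rcases le_or_gt 1 q with hq1 | hq1
  · have hq' : q * (q + 1) / (q + 2) ≤ q := by
      rw [div_le_iff₀ (by linarith)]
      nlinarith
    nlinarith [one_add_mul_self_le_rpow_one_add (by linarith : (-1 : ℝ) ≤ s) hq1]
  · have hchord := (concaveOn_rpow hq hq1.le).2 (mem_Ici.2 zero_le_one)
      (mem_Ici.2 zero_le_two) (sub_nonneg.2 hs1) hs0 (sub_add_cancel 1 s)
    simp only [smul_eq_mul, one_rpow, mul_one] at hchord
    have h1s : 1 - s + s * 2 = 1 + s := by ring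
    rw [h1s] at hchord
    nlinarith [mul_div_le_two_rpow_sub_one hq]

lemma hasDerivAt_rpow_one_add_sub_div_rpow (μ c : ℝ) {s : ℝ} (hs : 0 < s) :
    HasDerivAt (fun u => ((1 + u) ^ μ - 1 - c * u) / u ^ μ)
      (s ^ (μ - 1) * (μ + c * (μ - 1) * s - μ * (1 + s) ^ (μ - 1)) / (s ^ μ) ^ 2) s := by
  have hnum : HasDerivAt (fun u => (1 + u) ^ μ - 1 - c * u) (μ * (1 + s) ^ (μ - 1) - c) s := by
    have hpow : HasDerivAt (fun u => (1 + u) ^ μ) (μ * (1 + s) ^ (μ - 1)) s := by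
      simpa using ((hasDerivAt_id s).const_add 1).rpow_const (p := μ) (Or.inl (by simp; linarith))
    have hlin : HasDerivAt (fun u => c * u) c s := by simpa using (hasDerivAt_id s).const_mul c
    exact (hpow.sub_const 1).sub hlin
  refine (hnum.div (hasDerivAt_rpow_const (Or.inl hs.ne')) (by positivity)).congr_deriv ?_
  have hsμ : s ^ μ = s ^ (μ - 1) * s := by
    rw [← rpow_add_one hs.ne', sub_add_cancel]
  have h1sμ : (1 + s) ^ μ = (1 + s) ^ (μ - 1) * (1 + s) := by
    rw [← rpow_add_one (by positivity), sub_add_cancel]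
  rw [hsμ, h1sμ]
  ring

lemma antitoneOn_rpow_one_add_sub_div_rpow {μ : ℝ} (hμ : 1 ≤ μ) :
    AntitoneOn (fun s => ((1 + s) ^ μ - 1 - μ ^ 2 / (μ + 1) * s) / s ^ μ) (Ioc 0 1) := by
  have hderiv := fun s (hs : s ∈ Ioc (0 : ℝ) 1) =>
    hasDerivAt_rpow_one_add_sub_div_rpow μ (μ ^ 2 / (μ + 1)) hs.1
  apply antitoneOn_of_deriv_nonpos (convex_Ioc 0 1)
  · exact fun s hs => (hderiv s hs).continuousAt.continuousWithinAt
  · rw [interior_Ioc]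
    exact fun s hs => (hderiv s (Ioo_subset_Ioc_self hs)).differentiableAt.differentiableWithinAt
  · rw [interior_Ioc]
    intro s hs
    rw [(hderiv s (Ioo_subset_Ioc_self hs)).deriv]
    have hbern := one_add_mul_le_rpow_one_add (by linarith : 0 ≤ μ - 1) hs.1.le hs.2.le
    rw [sub_add_cancel, show μ - 1 + 2 = μ + 1 by ring] at hbern
    have hcoef : μ ^ 2 / (μ + 1) * (μ - 1) = μ * ((μ - 1) * μ / (μ + 1)) := by ring
    have hkey : μ + μ ^ 2 / (μ + 1) * (μ - 1) * s - μ * (1 + s) ^ (μ - 1) ≤ 0 := by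
      rw [hcoef]
      nlinarith
    have hs0 : 0 < s := hs.1
    exact div_nonpos_of_nonpos_of_nonneg (mul_nonpos_of_nonneg_of_nonpos (by positivity) hkey)
      (by positivity)

lemma one_add_mul_add_mul_rpow_le_rpow_one_add {μ t : ℝ} (hμ : 1 ≤ μ) (ht0 : 0 ≤ t)
    (ht1 : t ≤ 1) :
    1 + μ ^ 2 / (μ + 1) * t + (2 ^ μ - μ ^ 2 / (μ + 1) - 1) * t ^ μ ≤ (1 + t) ^ μ := by
  rcases ht0.eq_or_lt with rfl | ht0
  · simp [zero_rpow (by linarith : μ ≠ 0)]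
  have hratio := antitoneOn_rpow_one_add_sub_div_rpow hμ ⟨ht0, ht1⟩ ⟨one_pos, le_rfl⟩ ht1
  simp only [one_rpow, div_one, one_add_one_eq_two, mul_one] at hratio
  rw [le_div_iff₀ (by positivity)] at hratio
  linarith

lemma monotoneOn_of_sq_superadditive {f : ℝ → ℝ} (hf0 : ∀ t ∈ Icc (0 : ℝ) 1, 0 ≤ f t)
    (hsuper : ∀ x y : ℝ, 0 ≤ x → 0 ≤ y → x ^ 2 + y ^ 2 ≤ 1 →
      f (√(x ^ 2 + y ^ 2)) ^ 2 ≥ f x ^ 2 + f y ^ 2) :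
    MonotoneOn f (Icc 0 1) := by
  intro y ⟨hy0, _⟩ x ⟨hx0, hx1⟩ hyx
  -- write `x` as the hypotenuse `√(z ^ 2 + y ^ 2)` with `z = √(x ^ 2 - y ^ 2)`
  set z := √(x ^ 2 - y ^ 2)
  have hz0 : 0 ≤ z := sqrt_nonneg _
  have hzy : z ^ 2 + y ^ 2 = x ^ 2 := by rw [sq_sqrt (by nlinarith)]; ring
  have h := hsuper z y hz0 hy0 (by nlinarith)
  rw [hzy, sqrt_sq hx0] at h
  have hz1 : z ≤ 1 := by nlinarith
  have hfz := hf0 z ⟨hz0, hz1⟩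
  exact (pow_le_pow_iff_left₀ (hf0 y ⟨hy0, hyx.trans hx1⟩) (hf0 x ⟨hx0, hx1⟩) two_ne_zero).1
    (by nlinarith)

lemma rpow_two_mul_eq {a : ℝ} (ha : 0 ≤ a) (μ : ℝ) : a ^ (2 * μ) = (a ^ 2) ^ μ := by
  exact_mod_cast rpow_natCast_mul ha 2 μ

lemma add_mul_add_mul_rpow_le_rpow_two_mul {μ a b c : ℝ} (hμ : 1 ≤ μ) (ha : 0 < a) (hb : 0 ≤ b)
    (hba : b ≤ a) (hc : 0 ≤ c) (habc : a ^ 2 + b ^ 2 ≤ c ^ 2) :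
    a ^ (2 * μ) + μ ^ 2 / (μ + 1) * a ^ (2 * μ - 2) * b ^ 2
      + (2 ^ μ - μ ^ 2 / (μ + 1) - 1) * b ^ (2 * μ) ≤ c ^ (2 * μ) := by
  set t := b ^ 2 / a ^ 2
  have ht1 : t ≤ 1 := by
    rw [div_le_one (by positivity)]
    nlinarith
  have hat : a ^ 2 * t = b ^ 2 := mul_div_cancel₀ _ (by positivity)
  have hbinom := one_add_mul_add_mul_rpow_le_rpow_one_add hμ (by positivity) ht1
  have hlin : a ^ (2 * μ - 2) * b ^ 2 = a ^ (2 * μ) * t := by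
    rw [rpow_sub ha, rpow_two, ← hat]
    field_simp
  have hpow : b ^ (2 * μ) = a ^ (2 * μ) * t ^ μ := by
    rw [rpow_two_mul_eq ha.le, rpow_two_mul_eq hb, ← mul_rpow (by positivity) (by positivity), hat]
  calc a ^ (2 * μ) + μ ^ 2 / (μ + 1) * a ^ (2 * μ - 2) * b ^ 2
        + (2 ^ μ - μ ^ 2 / (μ + 1) - 1) * b ^ (2 * μ)
      = a ^ (2 * μ)
        * (1 + μ ^ 2 / (μ + 1) * t + (2 ^ μ - μ ^ 2 / (μ + 1) - 1) * t ^ μ) := by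
        rw [mul_assoc _ (a ^ _), hlin, hpow]
        ring
    _ ≤ a ^ (2 * μ) * (1 + t) ^ μ := by gcongr
    _ = (a ^ 2 + b ^ 2) ^ μ := by
        rw [rpow_two_mul_eq ha.le, ← mul_rpow (by positivity) (by positivity), mul_one_add, hat]
    _ ≤ c ^ (2 * μ) := by
        rw [rpow_two_mul_eq hc]
        gcongr

theorem stmt_14 (f : ℝ → ℝ)
    (hf0 : ∀ t ∈ Set.Icc (0 : ℝ) 1, 0 ≤ f t)
    (hsuper : ∀ x y : ℝ, 0 ≤ x → 0 ≤ y → x ^ 2 + y ^ 2 ≤ 1 →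
      f (Real.sqrt (x ^ 2 + y ^ 2)) ^ 2 ≥ f x ^ 2 + f y ^ 2)
    (μ γ : ℝ) (hμ : 1 ≤ μ) (hγ : γ = 2 * μ)
    (x y : ℝ) (hy0 : 0 ≤ y) (hyx : y ≤ x) (hxy : x ^ 2 + y ^ 2 ≤ 1)
    (hfx : 0 < f x) :
    f (Real.sqrt (x ^ 2 + y ^ 2)) ^ γ ≥
      f x ^ γ + (μ ^ 2 / (μ + 1)) * f x ^ (γ - 2) * f y ^ 2
        + (2 ^ μ - μ ^ 2 / (μ + 1) - 1) * f y ^ γ := by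
  subst hγ
  have hx0 : 0 ≤ x := hy0.trans hyx
  have hx1 : x ≤ 1 := by nlinarith
  have hr : √(x ^ 2 + y ^ 2) ∈ Icc (0 : ℝ) 1 := ⟨sqrt_nonneg _, sqrt_le_one.2 hxy⟩
  have hfyx : f y ≤ f x :=
    monotoneOn_of_sq_superadditive hf0 hsuper ⟨hy0, hyx.trans hx1⟩ ⟨hx0, hx1⟩ hyx
  exact add_mul_add_mul_rpow_le_rpow_two_mul hμ hfx (hf0 y ⟨hy0, hyx.trans hx1⟩) hfyx
    (hf0 _ hr) (hsuper x y hx0 hy0 hxy)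
end

section
/- For μ ≥ 1 and real a ≥ b ≥ 0, (a+b)^μ ≥ a^μ + (μ²/(μ+1))·a^{μ−1}·b + (2^μ − μ²/(μ+1) − 1)·b^μ. -/
/-!
Dividing by `a ^ μ` and putting `x = b / a ∈ [0, 1]`, the claim says that
`((1 + x) ^ μ - 1 - c x) / x ^ μ`, with `c = μ² / (μ + 1)`, is at least its value
`2 ^ μ - 1 - c` at `x = 1`. This quotient is antitone on `(0, 1]`: the sign of its derivative
is that of `(μ + 1) + μ (μ - 1) x - (μ + 1) (1 + x) ^ (μ - 1)`, which is nonpositive by Bernoulli's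
inequality for the exponent `μ - 1` when `μ ≥ 2`, and for the exponent `2 - μ` when `μ < 2`.
-/

open Real Set

section Bernoulli

variable {μ x : ℝ}

lemma add_mul_le_mul_rpow_one_add_of_lt_two (hμ : 1 ≤ μ) (hμ2 : μ < 2) (hx : 0 ≤ x)
    (hx1 : x ≤ 1) : (μ + 1) + μ * (μ - 1) * x ≤ (μ + 1) * (1 + x) ^ (μ - 1) := by
  have hx' : 0 < 1 + x := by linarith
  have hden : 0 < 1 + (2 - μ) * x := by nlinarith
  have hsplit : (1 + x) ^ (μ - 1) * (1 + x) ^ (2 - μ) = 1 + x := by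
    rw [← rpow_add hx']; norm_num
  have hbern : 1 + x ≤ (1 + x) ^ (μ - 1) * (1 + (2 - μ) * x) :=
    calc 1 + x = (1 + x) ^ (μ - 1) * (1 + x) ^ (2 - μ) := hsplit.symm
      _ ≤ (1 + x) ^ (μ - 1) * (1 + (2 - μ) * x) := by
        gcongr
        exact rpow_one_add_le_one_add_mul_self (by linarith) (by linarith) (by linarith)
  -- the difference of the two sides is `(μ - 1) x (1 - x) + (μ - 1)³ x²`
  have hpoly : ((μ + 1) + μ * (μ - 1) * x) * (1 + (2 - μ) * x) ≤ (μ + 1) * (1 + x) := by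
    nlinarith [mul_nonneg (mul_nonneg (sub_nonneg.2 hμ) hx) (sub_nonneg.2 hx1),
      mul_nonneg (pow_nonneg (sub_nonneg.2 hμ) 3) (sq_nonneg x)]
  refine le_of_mul_le_mul_right ?_ hden
  calc ((μ + 1) + μ * (μ - 1) * x) * (1 + (2 - μ) * x) ≤ (μ + 1) * (1 + x) := hpoly
    _ ≤ (μ + 1) * ((1 + x) ^ (μ - 1) * (1 + (2 - μ) * x)) := by gcongr
    _ = (μ + 1) * (1 + x) ^ (μ - 1) * (1 + (2 - μ) * x) := by ring

lemma add_mul_le_mul_rpow_one_add (hμ : 1 ≤ μ) (hx : 0 ≤ x) (hx1 : x ≤ 1) :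
    (μ + 1) + μ * (μ - 1) * x ≤ (μ + 1) * (1 + x) ^ (μ - 1) := by
  rcases lt_or_ge μ 2 with hμ2 | hμ2
  · exact add_mul_le_mul_rpow_one_add_of_lt_two hμ hμ2 hx hx1
  · have hbern := one_add_mul_self_le_rpow_one_add (by linarith : (-1 : ℝ) ≤ x)
      (by linarith : 1 ≤ μ - 1)
    nlinarith [mul_nonneg hx (sub_nonneg.2 hμ)]

end Bernoulli

noncomputable def binomialRemainderQuotient (μ c t : ℝ) : ℝ :=
  ((1 + t) ^ μ - 1 - c * t) * t ^ (-μ)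

lemma hasDerivAt_binomialRemainderQuotient (μ c : ℝ) {t : ℝ} (ht : 0 < t) :
    HasDerivAt (binomialRemainderQuotient μ c)
      (t ^ (-μ - 1) * (μ + c * (μ - 1) * t - μ * (1 + t) ^ (μ - 1))) t := by
  have ht' : 0 < 1 + t := by linarith
  have hpow : HasDerivAt (fun s : ℝ => (1 + s) ^ μ) (1 * μ * (1 + t) ^ (μ - 1)) t :=
    ((hasDerivAt_id t).const_add 1).rpow_const (Or.inl ht'.ne')
  have hquot : HasDerivAt (fun s => ((1 + s) ^ μ - 1 - c * s) * s ^ (-μ))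
      ((1 * μ * (1 + t) ^ (μ - 1) - c * 1) * t ^ (-μ)
        + ((1 + t) ^ μ - 1 - c * t) * (-μ * t ^ (-μ - 1))) t :=
    ((hpow.sub_const 1).sub ((hasDerivAt_id t).const_mul c)).mul
      (hasDerivAt_rpow_const (Or.inl ht.ne'))
  refine hquot.congr_deriv ?_
  have h1 : t ^ (-μ) = t ^ (-μ - 1) * t := by
    rw [← rpow_add_one ht.ne']; ring_nf
  have h2 : (1 + t) ^ μ = (1 + t) ^ (μ - 1) * (1 + t) := by
    rw [← rpow_add_one ht'.ne']; ring_nf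
  rw [h1, h2]
  ring

lemma binomialRemainderQuotient_antitoneOn {μ : ℝ} (hμ : 1 ≤ μ) :
    AntitoneOn (binomialRemainderQuotient μ (μ ^ 2 / (μ + 1))) (Ioc 0 1) := by
  have hderiv := fun t (ht : 0 < t) =>
    hasDerivAt_binomialRemainderQuotient μ (μ ^ 2 / (μ + 1)) ht
  refine antitoneOn_of_hasDerivWithinAt_nonpos (convex_Ioc 0 1)
    (fun t ht => (hderiv t ht.1).continuousAt.continuousWithinAt)
    (fun t ht => (hderiv t (by simp_all)).hasDerivWithinAt) fun t ht => ?_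
  rw [interior_Ioc] at ht
  have hμ1 : 0 < μ + 1 := by linarith
  have hbern := add_mul_le_mul_rpow_one_add hμ ht.1.le ht.2.le
  have hbracket : μ + μ ^ 2 / (μ + 1) * (μ - 1) * t - μ * (1 + t) ^ (μ - 1) =
      μ / (μ + 1) * ((μ + 1) + μ * (μ - 1) * t - (μ + 1) * (1 + t) ^ (μ - 1)) := by
    field_simp
  rw [hbracket]
  exact mul_nonpos_of_nonneg_of_nonpos (rpow_nonneg ht.1.le _)
    (mul_nonpos_of_nonneg_of_nonpos (div_nonneg (by linarith) hμ1.le) (by linarith))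

lemma one_add_mul_add_mul_rpow_le_one_add_rpow {μ x : ℝ} (hμ : 1 ≤ μ) (hx : 0 ≤ x)
    (hx1 : x ≤ 1) :
    1 + (μ ^ 2 / (μ + 1)) * x + (2 ^ μ - μ ^ 2 / (μ + 1) - 1) * x ^ μ ≤ (1 + x) ^ μ := by
  rcases hx.eq_or_lt with rfl | hx
  · simp [zero_rpow (by linarith : μ ≠ 0)]
  have hquot := binomialRemainderQuotient_antitoneOn hμ ⟨hx, hx1⟩ ⟨one_pos, le_rfl⟩ hx1
  set c := μ ^ 2 / (μ + 1)
  have hval1 : binomialRemainderQuotient μ c 1 = 2 ^ μ - c - 1 := by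
    simp only [binomialRemainderQuotient, one_rpow]; norm_num; ring
  have hcancel : binomialRemainderQuotient μ c x * x ^ μ = (1 + x) ^ μ - 1 - c * x := by
    rw [binomialRemainderQuotient, mul_assoc, ← rpow_add hx]; simp
  have := mul_le_mul_of_nonneg_right (hval1 ▸ hquot) (rpow_nonneg hx.le μ)
  linarith

theorem stmt_16 (μ a b : ℝ) (hμ : 1 ≤ μ) (hb : 0 ≤ b) (hab : b ≤ a) :
    (a + b) ^ μ ≥ a ^ μ + (μ ^ 2 / (μ + 1)) * a ^ (μ - 1) * b
      + (2 ^ μ - μ ^ 2 / (μ + 1) - 1) * b ^ μ := by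
  rcases (hb.trans hab).eq_or_lt with rfl | ha
  · obtain rfl : b = 0 := le_antisymm hab hb
    simp [zero_rpow (by linarith : μ ≠ 0)]
  obtain ⟨x, hx, hx1, rfl⟩ : ∃ x, 0 ≤ x ∧ x ≤ 1 ∧ a * x = b :=
    ⟨b / a, div_nonneg hb ha.le, (div_le_one ha).2 hab, mul_div_cancel₀ b ha.ne'⟩
  have hscaled := mul_le_mul_of_nonneg_left
    (one_add_mul_add_mul_rpow_le_one_add_rpow hμ hx hx1) (rpow_nonneg ha.le μ)
  have hsum : (a + a * x) ^ μ = a ^ μ * (1 + x) ^ μ := by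
    rw [← mul_rpow ha.le (by linarith), mul_one_add]
  have hlin : a ^ (μ - 1) * (a * x) = a ^ μ * x := by
    rw [rpow_sub_one ha.ne']; field_simp
  rw [hsum, mul_rpow ha.le hx, mul_assoc _ (a ^ (μ - 1)), hlin]
  linarith
end

section
/- For all real η ≥ 1 and reals c ≥ a + b with a ≥ b ≥ 0: c^η ≥ a^η + (η²/(η+1))·a^{η−1}·b + (2^η − η²/(η+1) − 1)·b^η. -/
/-!
With `μ = η²/(η+1)` and `K = 2^η - μ - 1`, fix `b` and consider
`F x = (x + b)^η - x^η - μ x^(η-1) b - K b^η` for `x ≥ b`; `K` is exactly the constant making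
`F b = 0`. Writing `p = η - 1`, the inequality `F' ≥ 0` is the increment bound
`(x + b)^p - x^p ≥ p(p+1)/(p+2) · x^(p-1) b` for `0 ≤ b ≤ x`. For `p ≥ 1` it follows from the
tangent line of the convex `t ↦ t^p` at `x`; for `p ≤ 1` from the tangent line of the concave
`t ↦ t^p` at `x + b`, together with `(1 + b/x)^(1-p) ≤ 2 - p`. Both tangent lines are Bernoulli's
inequality after scaling. Finally `c^η ≥ (a + b)^η` by monotonicity of `t ↦ t^η`.
-/

open Set

namespace Real

variable {p a b : ℝ}

lemma rpow_mul_one_add_div_rpow (ha : 0 < a) (hb : -a ≤ b) :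
    a ^ p * (1 + b / a) ^ p = (a + b) ^ p := by
  have hs : 0 ≤ 1 + b / a := by
    rw [← div_self ha.ne', ← add_div]; exact div_nonneg (by linarith) ha.le
  rw [← mul_rpow ha.le hs, mul_add, mul_one, mul_div_cancel₀ b ha.ne']

lemma rpow_mul_div (ha : 0 < a) : a ^ p * (b / a) = a ^ (p - 1) * b := by
  rw [rpow_sub_one ha.ne']; ring

lemma rpow_add_mul_le_add_rpow (hp : 1 ≤ p) (ha : 0 < a) (hb : -a ≤ b) :
    a ^ p + p * a ^ (p - 1) * b ≤ (a + b) ^ p := by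
  have hs : -1 ≤ b / a := by rwa [le_div_iff₀ ha, neg_one_mul]
  have := mul_le_mul_of_nonneg_left (one_add_mul_self_le_rpow_one_add hs hp)
    (rpow_nonneg ha.le p)
  rw [rpow_mul_one_add_div_rpow ha hb, mul_add, mul_one, mul_left_comm, rpow_mul_div ha] at this
  linarith

lemma add_rpow_le_rpow_add_mul (hp₀ : 0 ≤ p) (hp₁ : p ≤ 1) (ha : 0 < a) (hb : -a ≤ b) :
    (a + b) ^ p ≤ a ^ p + p * a ^ (p - 1) * b := by
  have hs : -1 ≤ b / a := by rwa [le_div_iff₀ ha, neg_one_mul]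
  have := mul_le_mul_of_nonneg_left (rpow_one_add_le_one_add_mul_self hs hp₀ hp₁)
    (rpow_nonneg ha.le p)
  rw [rpow_mul_one_add_div_rpow ha hb, mul_add, mul_one, mul_left_comm, rpow_mul_div ha] at this
  linarith

lemma div_mul_rpow_sub_one_le_add_rpow_sub_one (hp₀ : 0 ≤ p) (hp₁ : p ≤ 1) (ha : 0 < a)
    (hb : 0 ≤ b) (hab : b ≤ a) : (p + 1) / (p + 2) * a ^ (p - 1) ≤ (a + b) ^ (p - 1) := by
  have hr : 0 ≤ 1 + b / a := by positivity
  have hq : (1 + b / a) ^ (1 - p) ≤ 2 - p := by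
    have hba : b / a ≤ 1 := (div_le_one ha).mpr hab
    nlinarith [rpow_one_add_le_one_add_mul_self (by linarith : -1 ≤ b / a)
      (by linarith : 0 ≤ 1 - p) (by linarith : 1 - p ≤ 1)]
  have hq₀ : 0 < (1 + b / a) ^ (1 - p) := rpow_pos_of_pos (by positivity) _
  have hcoef : (p + 1) / (p + 2) ≤ (1 + b / a) ^ (p - 1) := by
    rw [show p - 1 = -(1 - p) by ring, rpow_neg hr, div_le_iff₀ (by linarith), inv_mul_eq_div,
      le_div_iff₀ hq₀]
    nlinarith
  rw [← rpow_mul_one_add_div_rpow ha (by linarith), mul_comm]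
  exact mul_le_mul_of_nonneg_left hcoef (rpow_nonneg ha.le _)

lemma mul_rpow_sub_one_mul_le_add_rpow_sub_rpow (hp : 0 ≤ p) (ha : 0 < a) (hb : 0 ≤ b)
    (hab : b ≤ a) : p * (p + 1) / (p + 2) * a ^ (p - 1) * b ≤ (a + b) ^ p - a ^ p := by
  rcases le_total p 1 with hp₁ | hp₁
  · have htangent := add_rpow_le_rpow_add_mul hp hp₁ (by positivity : 0 < a + b)
      (by linarith : -(a + b) ≤ -b)
    have hcoef := div_mul_rpow_sub_one_le_add_rpow_sub_one hp hp₁ ha hb hab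
    rw [add_neg_cancel_right] at htangent
    calc p * (p + 1) / (p + 2) * a ^ (p - 1) * b
        = p * b * ((p + 1) / (p + 2) * a ^ (p - 1)) := by ring
      _ ≤ p * b * (a + b) ^ (p - 1) := mul_le_mul_of_nonneg_left hcoef (mul_nonneg hp hb)
      _ ≤ (a + b) ^ p - a ^ p := by linarith
  · have htangent := rpow_add_mul_le_add_rpow hp₁ ha (by linarith : -a ≤ b)
    have hcoef : p * (p + 1) / (p + 2) ≤ p := by
      rw [div_le_iff₀ (by linarith)]; nlinarith
    calc p * (p + 1) / (p + 2) * a ^ (p - 1) * b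
        = p * (p + 1) / (p + 2) * (a ^ (p - 1) * b) := by ring
      _ ≤ p * (a ^ (p - 1) * b) :=
        mul_le_mul_of_nonneg_right hcoef (mul_nonneg (rpow_nonneg ha.le _) hb)
      _ ≤ (a + b) ^ p - a ^ p := by linarith

lemma refined_binomial_le_add_rpow {η a b : ℝ} (hη : 1 ≤ η) (hb : 0 ≤ b) (hab : b ≤ a) :
    a ^ η + η ^ 2 / (η + 1) * a ^ (η - 1) * b + (2 ^ η - η ^ 2 / (η + 1) - 1) * b ^ η
      ≤ (a + b) ^ η := by
  set μ := η ^ 2 / (η + 1)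
  let F : ℝ → ℝ := fun x ↦ (x + b) ^ η - x ^ η - μ * x ^ (η - 1) * b - (2 ^ η - μ - 1) * b ^ η
  have hF_b : F b = 0 := by
    simp only [F, ← two_mul, mul_rpow zero_le_two hb, mul_assoc,
      ← rpow_add_one' hb (by linarith : η - 1 + 1 ≠ 0), sub_add_cancel]
    ring
  let F' : ℝ → ℝ := fun x ↦
    η * ((x + b) ^ (η - 1) - x ^ (η - 1)) - μ * (η - 1) * x ^ (η - 1 - 1) * b
  have hF_deriv : ∀ x ∈ Ioi b, HasDerivAt F (F' x) x := by
    intro x hx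
    have hx : 0 < x := hb.trans_lt hx
    have hid := hasDerivAt_id' x
    refine ((((hid.add_const b).rpow_const (Or.inr hη)).sub (hid.rpow_const (Or.inr hη))).sub
      (((hid.rpow_const (p := η - 1) (Or.inl hx.ne')).const_mul μ).mul_const b)).sub_const
      ((2 ^ η - μ - 1) * b ^ η) |>.congr_deriv ?_
    ring
  have hF'_nonneg : ∀ x ∈ Ioi b, 0 ≤ F' x := by
    intro x hx
    have hinc := mul_rpow_sub_one_mul_le_add_rpow_sub_rpow (sub_nonneg.mpr hη)
      (hb.trans_lt hx) hb hx.le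
    rw [sub_add_cancel, show η - 1 + 2 = η + 1 by ring] at hinc
    have hF'x : F' x = η * ((x + b) ^ (η - 1) - x ^ (η - 1)
        - (η - 1) * η / (η + 1) * x ^ (η - 1 - 1) * b) := by
      simp only [F', μ]; ring
    rw [hF'x]
    exact mul_nonneg (by linarith) (by linarith)
  have hF_mono : MonotoneOn F (Ici b) := by
    refine monotoneOn_of_hasDerivWithinAt_nonneg (f' := F') (convex_Ici b) ?_ ?_ ?_
    · have hη₀ : 0 ≤ η := by linarith
      have hη₁ : 0 ≤ η - 1 := by linarith
      fun_prop (disch := assumption)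
    · simpa only [interior_Ici] using fun x hx ↦ (hF_deriv x hx).hasDerivWithinAt
    · simpa only [interior_Ici] using hF'_nonneg
  have hF_a : 0 ≤ F a := hF_b ▸ hF_mono self_mem_Ici hab hab
  simp only [F] at hF_a
  linarith

end Real

theorem stmt_19 (η a b c : ℝ) (hη : 1 ≤ η) (hb : 0 ≤ b) (hab : b ≤ a)
    (hc : a + b ≤ c) :
    c ^ η ≥ a ^ η + (η ^ 2 / (η + 1)) * a ^ (η - 1) * b
      + (2 ^ η - η ^ 2 / (η + 1) - 1) * b ^ η :=
  (Real.refined_binomial_le_add_rpow hη hb hab).trans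
    (Real.rpow_le_rpow (by linarith) hc (by linarith))
end
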